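/- arXiv:0912.2379 — 9 statements merged into one kernel-verified Lean document; each statement's English description precedes it below -/
import Mathlib

section
/- For a function f of bounded variation on a bounded interval I and a subinterval J of I with positive length, the supremum of |f| over J is at most the total variation of f on J plus (1/length(J)) times the integral of |f| over J. -/
open MeasureTheory Set

/-! Any two values of `f` on `J` differ by at most `var_J f`, so `|f x| - var_J f` is a lower
bound for `|f|` on `J`, hence for its mean value over `J`. -/

theorem BoundedVariationOn.integrableOn_of_isCompact {f : ℝ → ℝ} {s : Set ℝ} {μ : Measure ℝ}
    [IsFiniteMeasureOnCompacts μ] (hf : BoundedVariationOn f s) (hs : IsCompact s) :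
    IntegrableOn f s μ := by
  obtain ⟨p, q, hp, hq, rfl⟩ := hf.locallyBoundedVariationOn.exists_monotoneOn_sub_monotoneOn
  exact (hp.integrableOn_isCompact hs).sub (hq.integrableOn_isCompact hs)

theorem BoundedVariationOn.norm_le_eVariationOn_add_norm {α E : Type*} [LinearOrder α]
    [SeminormedAddCommGroup E] {f : α → E} {s : Set α} (hf : BoundedVariationOn f s) {x y : α}
    (hx : x ∈ s) (hy : y ∈ s) : ‖f x‖ ≤ (eVariationOn f s).toReal + ‖f y‖ := by
  have h := hf.dist_le hx hy
  rw [dist_eq_norm] at h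
  linarith [norm_sub_norm_le (f x) (f y)]

theorem sup_le_var_add_mean_general (f : ℝ → ℝ) (c d : ℝ) (J : Set ℝ)
    (hJ : J = Icc c d)
    (hm : 0 < (volume J).toReal)
    (hf : BoundedVariationOn f J) :
    ∀ x ∈ J, |f x| ≤ (eVariationOn f J).toReal
      + (1 / (volume J).toReal) * ∫ y in J, |f y| := by
  subst hJ
  intro x hx
  have hmean : (|f x| - (eVariationOn f (Icc c d)).toReal) * volume.real (Icc c d)
      ≤ ∫ y in Icc c d, |f y| :=
    setIntegral_ge_of_const_le_real measurableSet_Icc measure_Icc_lt_top.ne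
      (fun y hy => sub_le_iff_le_add'.2 (hf.norm_le_eVariationOn_add_norm hx hy))
      (hf.integrableOn_of_isCompact isCompact_Icc).abs
  rw [one_div, ← div_eq_inv_mul]
  linarith [(le_div_iff₀ hm).2 hmean]

/-- for `f` of bounded variation on a bounded interval `I` and a
subinterval `J ⊆ I` of positive length, `sup_J |f| ≤ var_J f + (1/m(J)) ∫_J |f|`. -/
theorem sup_le_var_add_mean (f : ℝ → ℝ) (a b c d : ℝ) (I J : Set ℝ)
    (hI : I = Icc a b) (hJ : J = Icc c d) (hJI : J ⊆ I)
    (hm : 0 < (volume J).toReal)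
    (hf : BoundedVariationOn f J) :
    ∀ x ∈ J, |f x| ≤ (eVariationOn f J).toReal
      + (1 / (volume J).toReal) * ∫ y in J, |f y| :=
  sup_le_var_add_mean_general f c d J hJ hm hf
end

section
/- If f is of bounded variation on an interval J and g is C¹ on J, then var_J(fg) ≤ var_J f · sup_J|g| + sup_J|g'| · ∫_J |f(x)| dx. -/
/-!
On a short interval `[c, d]` the product rule for variations gives
`var (f g) ≤ sup |g| · var f + sup |f| · var g`, where `var g ≤ sup |g'| · (d - c)` by the mean
value theorem, and `sup |f| · (d - c) ≤ ∫ |f| + var f · (d - c)` because `f` never leaves the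
band of width `var f` around any of its values. Summing over a uniform partition of `[a, b]` of
mesh `h` gives `var (f g) ≤ var f · sup |g| + sup |g'| · (∫ |f| + h · var f)`; let `h → 0`.
-/

open MeasureTheory Set Filter Topology
open scoped ENNReal NNReal
open ENNReal (ofReal)

theorem biSup_enorm_mul_measure_le {α E : Type*} [LinearOrder α] [MeasurableSpace α]
    [SeminormedAddCommGroup E] (μ : Measure α) (f : α → E) {s : Set α} (hs : MeasurableSet s) :
    (⨆ x ∈ s, ‖f x‖ₑ) * μ s ≤ ∫⁻ y in s, ‖f y‖ₑ ∂μ + eVariationOn f s * μ s := by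
  simp only [ENNReal.iSup_mul]
  refine iSup₂_le fun x hx => ?_
  have hpoint : ∀ y ∈ s, ‖f x‖ₑ ≤ ‖f y‖ₑ + eVariationOn f s := fun y hy =>
    calc ‖f x‖ₑ = edist (f x) 0 := (edist_zero_right _).symm
      _ ≤ edist (f x) (f y) + edist (f y) 0 := edist_triangle _ _ _
      _ ≤ eVariationOn f s + ‖f y‖ₑ := by
        rw [edist_zero_right]; gcongr; exact eVariationOn.edist_le f hx hy
      _ = ‖f y‖ₑ + eVariationOn f s := add_comm _ _
  calc ‖f x‖ₑ * μ s = ∫⁻ _ in s, ‖f x‖ₑ ∂μ := (setLIntegral_const s _).symm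
    _ ≤ ∫⁻ y in s, (‖f y‖ₑ + eVariationOn f s) ∂μ := setLIntegral_mono' hs hpoint
    _ = ∫⁻ y in s, ‖f y‖ₑ ∂μ + eVariationOn f s * μ s := by
      rw [lintegral_add_right _ measurable_const, setLIntegral_const]

theorem setLIntegral_Icc_eq_sum {α : Type*} [LinearOrder α] [TopologicalSpace α]
    [OrderClosedTopology α] [MeasurableSpace α] [OpensMeasurableSpace α] {μ : Measure α}
    [NullSingletonClass μ] (F : α → ℝ≥0∞) {t : ℕ → α} (ht : Monotone t) (n : ℕ) :
    ∫⁻ x in Icc (t 0) (t n), F x ∂μ =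
      ∑ k ∈ Finset.range n, ∫⁻ x in Icc (t k) (t (k + 1)), F x ∂μ := by
  simp only [← setLIntegral_congr (Ioc_ae_eq_Icc (μ := μ))]
  induction n with
  | zero => simp
  | succ n ih =>
    rw [Finset.sum_range_succ, ← ih, ← lintegral_union measurableSet_Ioc
      (Ioc_disjoint_Ioc_of_le le_rfl), Ioc_union_Ioc_eq_Ioc (ht n.zero_le) (ht n.le_succ)]

theorem eVariationOn_mul_Icc_le {f g : ℝ → ℝ} {c d : ℝ} {C : ℝ≥0} {D : ℝ≥0∞}
    (hgD : ∀ x ∈ Icc c d, ‖g x‖ₑ ≤ D) (hgC : LipschitzOnWith C g (Icc c d)) :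
    eVariationOn (fun x => f x * g x) (Icc c d) ≤ D * eVariationOn f (Icc c d) +
      C * ((∫⁻ x in Icc c d, ‖f x‖ₑ) + eVariationOn f (Icc c d) * ofReal (d - c)) := by
  have hvar_g : eVariationOn g (Icc c d) ≤ C * ofReal (d - c) := by
    simpa using hgC.comp_eVariationOn_le (mapsTo_id _)
  have hsup := biSup_enorm_mul_measure_le volume f (measurableSet_Icc (a := c) (b := d))
  rw [Real.volume_Icc] at hsup
  calc eVariationOn (fun x => f x * g x) (Icc c d)
      ≤ (⨆ x ∈ Icc c d, ‖f x‖ₑ) * eVariationOn g (Icc c d) + D * eVariationOn f (Icc c d) :=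
        eVariationOn_fun_mul_le (fun x hx => le_biSup (fun x => ‖f x‖ₑ) hx) hgD
    _ ≤ (⨆ x ∈ Icc c d, ‖f x‖ₑ) * (C * ofReal (d - c)) + D * eVariationOn f (Icc c d) := by
        gcongr
    _ = D * eVariationOn f (Icc c d) + C * ((⨆ x ∈ Icc c d, ‖f x‖ₑ) * ofReal (d - c)) := by
        ring
    _ ≤ _ := by gcongr

theorem eVariationOn_mul_le_of_partition {f g : ℝ → ℝ} {C : ℝ≥0} {D : ℝ≥0∞} {a b h : ℝ}
    {t : ℕ → ℝ} {n : ℕ} (ht : Monotone t) (ht0 : t 0 = a) (htn : t n = b)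
    (hstep : ∀ k < n, t (k + 1) - t k ≤ h)
    (hgD : ∀ x ∈ Icc a b, ‖g x‖ₑ ≤ D) (hgC : LipschitzOnWith C g (Icc a b)) :
    eVariationOn (fun x => f x * g x) (Icc a b) ≤ D * eVariationOn f (Icc a b) +
      C * ((∫⁻ x in Icc a b, ‖f x‖ₑ) + eVariationOn f (Icc a b) * ofReal h) := by
  subst ht0 htn
  have hsub : ∀ k < n, Icc (t k) (t (k + 1)) ⊆ Icc (t 0) (t n) := fun k hk =>
    Icc_subset_Icc (ht k.zero_le) (ht hk)
  rw [← eVariationOn.sum' _ ht, ← eVariationOn.sum' _ ht, setLIntegral_Icc_eq_sum _ ht]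
  calc ∑ k ∈ Finset.range n, eVariationOn (fun x => f x * g x) (Icc (t k) (t (k + 1)))
      ≤ ∑ k ∈ Finset.range n, (D * eVariationOn f (Icc (t k) (t (k + 1))) +
          C * ((∫⁻ x in Icc (t k) (t (k + 1)), ‖f x‖ₑ) +
            eVariationOn f (Icc (t k) (t (k + 1))) * ofReal h)) := by
        refine Finset.sum_le_sum fun k hk => ?_
        have hk := Finset.mem_range.1 hk
        grw [eVariationOn_mul_Icc_le (fun x hx => hgD x (hsub k hk hx)) (hgC.mono (hsub k hk)),
          hstep k hk]
    _ = _ := by simp only [Finset.sum_add_distrib, ← Finset.mul_sum, ← Finset.sum_mul]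

theorem exists_monotone_partition_Icc {a b : ℝ} (hab : a ≤ b) {N : ℕ} (hN : N ≠ 0) :
    ∃ t : ℕ → ℝ, Monotone t ∧ t 0 = a ∧ t N = b ∧ ∀ k, t (k + 1) - t k = (b - a) / N := by
  have hstep : 0 ≤ (b - a) / N := div_nonneg (sub_nonneg.2 hab) N.cast_nonneg
  refine ⟨fun k => a + k * ((b - a) / N), fun i j hij => ?_, by simp, by field_simp; ring,
    fun k => by push_cast; ring⟩
  dsimp only
  gcongr

theorem var_mul_C1_le_general (a b : ℝ) (f g g' : ℝ → ℝ)
    (hf : BoundedVariationOn f (Icc a b))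
    (hfi : IntegrableOn f (Icc a b))
    (hg : ∀ x ∈ Icc a b, HasDerivWithinAt g (g' x) (Icc a b) x)
    (Mg Mg' : ℝ) (hMg : ∀ x ∈ Icc a b, |g x| ≤ Mg)
    (hMg' : ∀ x ∈ Icc a b, |g' x| ≤ Mg') :
    eVariationOn (fun x => f x * g x) (Icc a b) ≤
      eVariationOn f (Icc a b) * ENNReal.ofReal Mg
        + ENNReal.ofReal (Mg' * ∫ x in Icc a b, |f x|) := by
  rcases lt_or_ge b a with hba | hab
  · simp [Icc_eq_empty_of_lt hba]
  set V := eVariationOn f (Icc a b)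
  set L := ∫⁻ x in Icc a b, ‖f x‖ₑ
  have hgD : ∀ x ∈ Icc a b, ‖g x‖ₑ ≤ ofReal Mg := fun x hx => by
    rw [Real.enorm_eq_ofReal_abs]; exact ENNReal.ofReal_le_ofReal (hMg x hx)
  have hgC : LipschitzOnWith Mg'.toNNReal g (Icc a b) :=
    (convex_Icc a b).lipschitzOnWith_of_nnnorm_hasDerivWithin_le hg fun x hx => by
      rw [← NNReal.coe_le_coe, coe_nnnorm]; exact (hMg' x hx).trans (Real.le_coe_toNNReal _)
  have hgrid : ∀ N : ℕ, N ≠ 0 → eVariationOn (fun x => f x * g x) (Icc a b) ≤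
      ofReal Mg * V + Mg'.toNNReal * (L + V * ofReal ((b - a) / N)) := by
    intro N hN
    obtain ⟨t, ht, ht0, htN, hstep⟩ := exists_monotone_partition_Icc hab hN
    exact eVariationOn_mul_le_of_partition ht ht0 htN (fun k _ => (hstep k).le) hgD hgC
  have hmesh : Tendsto (fun N : ℕ => ofReal ((b - a) / N)) atTop (𝓝 0) := by
    simpa using ENNReal.tendsto_ofReal (tendsto_const_div_atTop_nhds_zero_nat (b - a))
  have hlim : Tendsto
      (fun N : ℕ => ofReal Mg * V + Mg'.toNNReal * (L + V * ofReal ((b - a) / N)))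
      atTop (𝓝 (ofReal Mg * V + Mg'.toNNReal * L)) := by
    simpa using tendsto_const_nhds.add (ENNReal.Tendsto.const_mul
      (tendsto_const_nhds.add (ENNReal.Tendsto.const_mul hmesh (Or.inr hf)))
      (Or.inr ENNReal.coe_ne_top))
  have hL : L = ofReal (∫ x in Icc a b, |f x|) := by
    simpa using (ofReal_integral_norm_eq_lintegral_enorm hfi).symm
  calc eVariationOn (fun x => f x * g x) (Icc a b) ≤ ofReal Mg * V + Mg'.toNNReal * L :=
        ge_of_tendsto hlim ((eventually_ne_atTop 0).mono hgrid)
    _ = V * ofReal Mg + ofReal (Mg' * ∫ x in Icc a b, |f x|) := by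
        rw [hL, ENNReal.ofReal_mul' (integral_nonneg fun _ => abs_nonneg _), mul_comm]; rfl

/-- if `f` is of bounded variation and integrable on `J = [a,b]` and `g` is `C¹`
on `J`, then `var_J (fg) ≤ var_J f · sup_J |g| + sup_J |g'| · ∫_J |f|`. -/
theorem var_mul_C1_le (a b : ℝ) (f g g' : ℝ → ℝ)
    (hf : BoundedVariationOn f (Icc a b))
    (hfi : IntegrableOn f (Icc a b))
    (hg : ∀ x ∈ Icc a b, HasDerivWithinAt g (g' x) (Icc a b) x)
    (hg'c : ContinuousOn g' (Icc a b))
    (Mg Mg' : ℝ) (hMg : ∀ x ∈ Icc a b, |g x| ≤ Mg)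
    (hMg' : ∀ x ∈ Icc a b, |g' x| ≤ Mg') :
    eVariationOn (fun x => f x * g x) (Icc a b) ≤
      eVariationOn f (Icc a b) * ENNReal.ofReal Mg
        + ENNReal.ofReal (Mg' * ∫ x in Icc a b, |f x|) :=
  var_mul_C1_le_general a b f g g' hf hfi hg Mg Mg' hMg hMg'
end

section
/- For f of bounded variation on an interval I and J ⊆ I a subinterval, the variation of f·χ_J (f times the indicator of J) on I is at most var_J f + 2·sup_J |f|. -/
/-!
Split the line at `c` and `d`. On `[c, d]` the function `f · χ_J` is `f`; on `(-∞, c]` and on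
`[d, ∞)` it vanishes except at the endpoint, so each of these rays contributes a single jump of
size at most `M`.
-/

open Set

namespace eVariationOn

variable {α E : Type*} [LinearOrder α] [PseudoEMetricSpace E]

theorem le_edist_of_eq_off_max {h : α → E} {s : Set α} {c : α} {y : E}
    (hs : ∀ x ∈ s, x ≤ c) (hy : ∀ x ∈ s, x ≠ c → h x = y) :
    eVariationOn h s ≤ edist (h c) y := by
  rw [eVariationOn_eq_strictMonoOn]
  refine iSup_le ?_
  rintro ⟨n, u, hu, us⟩
  dsimp only
  -- along a strictly monotone partition only the last point can be `c`
  have below : ∀ i < n, h (u i) = y := fun i hi ↦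
    have hlt : u i < u n := hu (mem_Iic.2 hi.le) self_mem_Iic hi
    hy _ (us i (mem_Iic.2 hi.le)) (hlt.trans_le (hs _ (us n self_mem_Iic))).ne
  cases n with
  | zero => simp
  | succ n =>
    rw [Finset.sum_range_succ, Finset.sum_eq_zero fun i hi ↦ by
      have := Finset.mem_range.1 hi
      rw [below (i + 1) (by omega), below i (by omega), edist_self], zero_add,
      below n n.lt_succ_self]
    by_cases hc : u (n + 1) = c
    · rw [hc]
    · rw [hy _ (us _ self_mem_Iic) hc, edist_self]
      exact zero_le

theorem le_edist_of_eq_off_min {h : α → E} {s : Set α} {c : α} {y : E}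
    (hs : ∀ x ∈ s, c ≤ x) (hy : ∀ x ∈ s, x ≠ c → h x = y) :
    eVariationOn h s ≤ edist (h c) y := by
  rw [← comp_ofDual]
  exact le_edist_of_eq_off_max (c := OrderDual.toDual c) hs hy

theorem indicator_Icc_le [Zero E] (f : α → E) {c d : α} (hcd : c ≤ d) (s : Set α) :
    eVariationOn ((Icc c d).indicator f) s ≤
      edist (f c) 0 + eVariationOn f (Icc c d) + edist (f d) 0 := by
  set g := (Icc c d).indicator f
  have hc : g c = f c := indicator_of_mem (left_mem_Icc.2 hcd) f
  have hd : g d = f d := indicator_of_mem (right_mem_Icc.2 hcd) f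
  have left : eVariationOn g (Iic c) ≤ edist (f c) 0 := hc ▸
    le_edist_of_eq_off_max (fun _ hx ↦ hx) fun x hx hxc ↦
      indicator_of_notMem (fun hmem ↦ hxc (le_antisymm hx hmem.1)) f
  have right : eVariationOn g (Ici d) ≤ edist (f d) 0 := hd ▸
    le_edist_of_eq_off_min (fun _ hx ↦ hx) fun x hx hxd ↦
      indicator_of_notMem (fun hmem ↦ hxd (le_antisymm hmem.2 hx)) f
  have middle : eVariationOn g (Icc c d) = eVariationOn f (Icc c d) :=
    eq_of_eqOn fun x hx ↦ indicator_of_mem hx f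
  calc eVariationOn g s ≤ eVariationOn g univ := mono g (subset_univ s)
    _ = eVariationOn g (Iic c) + eVariationOn g (Icc c d) + eVariationOn g (Ici d) := by
      rw [← Iic_union_Ici (a := d), union g isGreatest_Iic isLeast_Ici,
        ← Iic_union_Icc_eq_Iic hcd, union g isGreatest_Iic (isLeast_Icc hcd)]
    _ ≤ edist (f c) 0 + eVariationOn f (Icc c d) + edist (f d) 0 := by
      rw [middle]
      gcongr

end eVariationOn

theorem var_indicator_le_general (a b c d : ℝ) (f : ℝ → ℝ) (J : Set ℝ) (hJ : J = Icc c d)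
    (M : ℝ) (hM : ∀ x ∈ J, |f x| ≤ M) :
    eVariationOn (J.indicator f) (Icc a b) ≤
      eVariationOn f J + ENNReal.ofReal (2 * M) := by
  subst hJ
  rcases le_or_gt c d with hcd | hdc
  · have jump : ∀ x ∈ Icc c d, edist (f x) 0 ≤ ENNReal.ofReal M := fun x hx ↦ by
      rw [edist_zero_right, Real.enorm_eq_ofReal_abs]
      exact ENNReal.ofReal_le_ofReal (hM x hx)
    have hM0 : 0 ≤ M := (abs_nonneg _).trans (hM c (left_mem_Icc.2 hcd))
    calc _ ≤ edist (f c) 0 + eVariationOn f (Icc c d) + edist (f d) 0 :=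
          eVariationOn.indicator_Icc_le f hcd _
      _ ≤ ENNReal.ofReal M + eVariationOn f (Icc c d) + ENNReal.ofReal M := by
          gcongr
          exacts [jump c (left_mem_Icc.2 hcd), jump d (right_mem_Icc.2 hcd)]
      _ = eVariationOn f (Icc c d) + ENNReal.ofReal (2 * M) := by
          rw [two_mul, ENNReal.ofReal_add hM0 hM0]
          ring
  · rw [Icc_eq_empty_of_lt hdc, indicator_empty,
      eVariationOn.constant_on (subsingleton_singleton.anti (by rintro _ ⟨_, _, rfl⟩; rfl))]
    exact zero_le

/-- for `f` of bounded variation on `I` and `J ⊆ I` a subinterval,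
`var_I (f·χ_J) ≤ var_J f + 2 sup_J |f|`. -/
theorem var_indicator_le (a b c d : ℝ) (f : ℝ → ℝ) (J : Set ℝ) (hJ : J = Icc c d)
    (hJI : J ⊆ Icc a b) (hf : BoundedVariationOn f (Icc a b))
    (M : ℝ) (hM : ∀ x ∈ J, |f x| ≤ M) :
    eVariationOn (J.indicator f) (Icc a b) ≤
      eVariationOn f J + ENNReal.ofReal (2 * M) :=
  var_indicator_le_general a b c d f J hJ M hM
end

section
/- For every α ∈ (0,1) and every n ≥ 1, the derivative of g_{n,α}(x) = 1/|(T_α^n)'(x)| on the interior of each cylinder of 𝒫_n satisfies |g_{n,α}'(x)| ≤ 2/(1 − γ_α), where γ_α = max{α², (α−1)²}. -/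
/-
Away from `0` and from its discontinuities, `T_α` is locally a Möbius branch `w ↦ σ / w - m`
with `|σ| = 1`. For `h = σ / f - m` one computes `|h''| / h'² = |f'' f² / f'² - 2 f|`, so the
distortion `δ = |f''| / f'²` of `T_α^n` obeys `δ_{k+1} ≤ 2 |u| + u² δ_k` with `u = T_α^k y`.
As `u ∈ [α - 1, α]` gives `|u| ≤ 1` and `u² ≤ γ_α`, the bound `K = 2 / (1 - γ_α)` propagates
(`2 + γ_α K = K`). This holds at every point whose orbit avoids the countably many singular
points of `T_α`; such points are dense, and `|g'| = |f''| / f'²` is continuous on the cylinder.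
-/

open Set

/-- Nakada's α-continued fraction map on `[α-1, α]`. -/
noncomputable def T (α : ℝ) (x : ℝ) : ℝ :=
  if x = 0 then 0 else 1 / |x| - ⌊1 / |x| + 1 - α⌋

open Topology Filter

theorem eventually_floor_eq {R : Type*} [Ring R] [LinearOrder R] [IsStrictOrderedRing R]
    [FloorRing R] [TopologicalSpace R] [OrderTopology R] {u : R} (hu : ∀ m : ℤ, u ≠ m) :
    ∀ᶠ v in 𝓝 u, ⌊v⌋ = ⌊u⌋ := by
  have hlt : (⌊u⌋ : R) < u := (Int.floor_le u).lt_of_ne (hu _).symm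
  filter_upwards [Ioo_mem_nhds hlt (Int.lt_floor_add_one u)] with v hv
  exact Int.floor_eq_iff.mpr ⟨hv.1.le, hv.2⟩

theorem exists_eventually_one_div_abs_eq {z : ℝ} (hz : z ≠ 0) :
    ∃ σ : ℝ, |σ| = 1 ∧ (fun w => 1 / |w|) =ᶠ[𝓝 z] fun w => σ * w⁻¹ := by
  rcases hz.lt_or_gt with hneg | hpos
  · refine ⟨-1, by norm_num, ?_⟩
    filter_upwards [Iio_mem_nhds hneg] with w hw
    rw [abs_of_neg hw, one_div, inv_neg, neg_one_mul]
  · refine ⟨1, by norm_num, ?_⟩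
    filter_upwards [Ioi_mem_nhds hpos] with w hw
    rw [abs_of_pos hw, one_div, one_mul]

theorem abs_deriv_one_div_abs {φ : ℝ → ℝ} {x φ' : ℝ} (hφ : HasDerivAt φ φ' x) (hx : φ x ≠ 0) :
    |deriv (fun y => 1 / |φ y|) x| = |φ'| / φ x ^ 2 := by
  obtain ⟨σ, hσ, hev⟩ := exists_eventually_one_div_abs_eq hx
  have heq : (fun y => 1 / |φ y|) =ᶠ[𝓝 x] fun y => σ * (φ y)⁻¹ :=
    hev.comp_tendsto hφ.continuousAt.tendsto
  rw [heq.deriv_eq, ((hφ.fun_inv hx).const_mul σ).deriv, abs_mul, hσ, one_mul, abs_div, abs_neg,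
    abs_pow, sq_abs]

theorem le_of_eventually_le_of_dense_compl {X α : Type*} [TopologicalSpace X] [TopologicalSpace α]
    [Preorder α] [OrderClosedTopology α] {φ ψ : X → α} {S : Set X} {x : X} (hS : Dense Sᶜ)
    (hφ : ContinuousAt φ x) (hψ : ContinuousAt ψ x) (h : ∀ᶠ y in 𝓝 x, y ∉ S → φ y ≤ ψ y) :
    φ x ≤ ψ x := by
  have : (𝓝[Sᶜ] x).NeBot := mem_closure_iff_nhdsWithin_neBot.mp (hS x)
  exact le_of_tendsto_of_tendsto (b := 𝓝[Sᶜ] x) (hφ.tendsto.mono_left nhdsWithin_le_nhds)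
    (hψ.tendsto.mono_left nhdsWithin_le_nhds) (eventually_nhdsWithin_iff.mpr h)

def DistortionLE (K : ℝ) (f : ℝ → ℝ) (y : ℝ) : Prop :=
  ∃ (D : ℝ → ℝ) (E : ℝ), (∀ᶠ w in 𝓝 y, HasDerivAt f (D w) w) ∧ HasDerivAt D E y ∧
    |E| ≤ K * D y ^ 2

namespace DistortionLE

variable {K y : ℝ} {f g : ℝ → ℝ}

theorem id (hK : 0 ≤ K) : DistortionLE K id y :=
  ⟨fun _ => 1, 0, Eventually.of_forall hasDerivAt_id, hasDerivAt_const y 1, by simpa using hK⟩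

theorem congr (h : DistortionLE K f y) (hfg : f =ᶠ[𝓝 y] g) : DistortionLE K g y := by
  obtain ⟨D, E, hf, hD, hE⟩ := h
  refine ⟨D, E, ?_, hD, hE⟩
  filter_upwards [hf, hfg.eventuallyEq_nhds] with w hw hfgw
  exact hw.congr_of_eventuallyEq hfgw.symm

theorem continuousAt (h : DistortionLE K f y) : ContinuousAt f y := by
  obtain ⟨D, E, hf, -⟩ := h
  exact hf.self_of_nhds.continuousAt

theorem abs_deriv_deriv_le (h : DistortionLE K f y) : |deriv (deriv f) y| ≤ K * deriv f y ^ 2 := by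
  obtain ⟨D, E, hf, hD, hE⟩ := h
  have hfD : deriv f =ᶠ[𝓝 y] D := hf.mono fun w hw => hw.deriv
  rwa [hfD.deriv_eq, hD.deriv, hfD.self_of_nhds]

theorem inv_comp (h : DistortionLE K f y) {σ : ℝ} (hσ : |σ| = 1) (m : ℝ) (hy : f y ≠ 0)
    (hK : 2 * |f y| + f y ^ 2 * K ≤ K) : DistortionLE K (fun w => σ * (f w)⁻¹ - m) y := by
  obtain ⟨D, E, hf, hD, hE⟩ := h
  have hf0 : ∀ᶠ w in 𝓝 y, f w ≠ 0 := hf.self_of_nhds.continuousAt.eventually_ne hy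
  refine ⟨fun w => σ * (-D w / f w ^ 2), σ * (2 * D y ^ 2 / f y ^ 3 - E / f y ^ 2), ?_, ?_, ?_⟩
  · filter_upwards [hf, hf0] with w hw hw0
    exact ((hw.inv hw0).const_mul σ).sub_const m
  · have hsq := hf.self_of_nhds.fun_pow 2
    refine ((hD.fun_neg.fun_div hsq (pow_ne_zero 2 hy)).const_mul σ).congr_deriv ?_
    field_simp
    ring
  · have hy4 : 0 < f y ^ 4 := by positivity
    have key : |2 * D y ^ 2 * f y - E * f y ^ 2| ≤ K * D y ^ 2 := calc
      _ ≤ 2 * D y ^ 2 * |f y| + |E| * f y ^ 2 := by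
        refine (abs_sub _ _).trans_eq ?_
        simp only [abs_mul, abs_pow, sq_abs, abs_two]
      _ ≤ 2 * D y ^ 2 * |f y| + K * D y ^ 2 * f y ^ 2 := by gcongr
      _ = D y ^ 2 * (2 * |f y| + f y ^ 2 * K) := by ring
      _ ≤ D y ^ 2 * K := by gcongr
      _ = K * D y ^ 2 := mul_comm _ _
    have hexp : 2 * D y ^ 2 / f y ^ 3 - E / f y ^ 2
        = (2 * D y ^ 2 * f y - E * f y ^ 2) / f y ^ 4 := by
      field_simp
    have hσ2 : σ ^ 2 = 1 := by rw [← sq_abs, hσ, one_pow]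
    rw [abs_mul, hσ, one_mul, hexp, abs_div, abs_of_pos hy4]
    calc _ ≤ K * D y ^ 2 / f y ^ 4 := by gcongr
      _ = _ := by rw [mul_pow, hσ2]; field_simp

end DistortionLE

theorem T_mem_Icc {α : ℝ} (hα : α ∈ Icc (0:ℝ) 1) (y : ℝ) : T α y ∈ Icc (α - 1) α := by
  unfold T
  split_ifs
  · exact ⟨by linarith [hα.2], hα.1⟩
  · have h₁ := Int.floor_le (1 / |y| + 1 - α)
    have h₂ := Int.lt_floor_add_one (1 / |y| + 1 - α)
    constructor <;> linarith

theorem iterate_T_mem_Icc {α : ℝ} (hα : α ∈ Icc (0:ℝ) 1) {y : ℝ} (hy : y ∈ Icc (α - 1) α)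
    (n : ℕ) : (T α)^[n] y ∈ Icc (α - 1) α := by
  induction n with
  | zero => exact hy
  | succ n _ => rw [Function.iterate_succ_apply']; exact T_mem_Icc hα _

def singularSet (α : ℝ) : Set ℝ := {y | y = 0 ∨ ∃ m : ℤ, 1 / |y| + 1 - α = m}

theorem exists_T_eventuallyEq_inv {α z : ℝ} (hz : z ∉ singularSet α) :
    ∃ σ m : ℝ, |σ| = 1 ∧ T α =ᶠ[𝓝 z] fun w => σ * w⁻¹ - m := by
  simp only [singularSet, mem_ofPred_eq, not_or, not_exists] at hz
  obtain ⟨hz0, hzm⟩ := hz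
  obtain ⟨σ, hσ, hev⟩ := exists_eventually_one_div_abs_eq hz0
  have hcont : ContinuousAt (fun w => 1 / |w| + 1 - α) z := by
    fun_prop (disch := positivity)
  have hfloor := hcont.eventually (eventually_floor_eq fun m => hzm m)
  refine ⟨σ, ⌊1 / |z| + 1 - α⌋, hσ, ?_⟩
  filter_upwards [hev, hfloor, eventually_ne_nhds hz0] with w hw hwf hw0
  simp only [T, if_neg hw0, hwf, ← hw]

theorem max_sq_sub_one_sq_lt_one {α : ℝ} (hα : α ∈ Ioo (0:ℝ) 1) :
    max (α ^ 2) ((α - 1) ^ 2) < 1 :=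
  max_lt (by nlinarith [hα.1, hα.2]) (by nlinarith [hα.1, hα.2])

theorem two_mul_abs_add_sq_mul_le {α u : ℝ} (hα : α ∈ Ioo (0:ℝ) 1) (hu : u ∈ Icc (α - 1) α) :
    2 * |u| + u ^ 2 * (2 / (1 - max (α ^ 2) ((α - 1) ^ 2)))
      ≤ 2 / (1 - max (α ^ 2) ((α - 1) ^ 2)) := by
  have hγ := max_sq_sub_one_sq_lt_one hα
  set γ := max (α ^ 2) ((α - 1) ^ 2)
  have hu1 : |u| ≤ 1 := abs_le.mpr ⟨by linarith [hu.1, hα.1], by linarith [hu.2, hα.2]⟩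
  have huγ : u ^ 2 ≤ γ := by
    rcases le_total 0 u with h | h
    · exact le_max_of_le_left (by nlinarith [hu.2])
    · exact le_max_of_le_right (by nlinarith [hu.1])
  have hK : 2 / (1 - γ) * (1 - γ) = 2 := div_mul_cancel₀ _ (sub_pos.mpr hγ).ne'
  nlinarith [div_nonneg zero_le_two (sub_pos.mpr hγ).le]

theorem distortionLE_iterate_T {α : ℝ} (hα : α ∈ Ioo (0:ℝ) 1) {y : ℝ} (hy : y ∈ Icc (α - 1) α)
    (hgood : ∀ j, (T α)^[j] y ∉ singularSet α) (n : ℕ) :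
    DistortionLE (2 / (1 - max (α ^ 2) ((α - 1) ^ 2))) ((T α)^[n]) y := by
  induction n with
  | zero =>
    exact .id (div_nonneg zero_le_two (sub_pos.mpr (max_sq_sub_one_sq_lt_one hα)).le)
  | succ n ih =>
    obtain ⟨σ, m, hσ, hT⟩ := exists_T_eventuallyEq_inv (hgood n)
    have hz := iterate_T_mem_Icc (Ioo_subset_Icc_self hα) hy n
    have hz0 : (T α)^[n] y ≠ 0 := fun h => hgood n (Or.inl h)
    refine (ih.inv_comp hσ m hz0 (two_mul_abs_add_sq_mul_le hα hz)).congr ?_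
    rw [Function.iterate_succ']
    exact (hT.comp_tendsto ih.continuousAt.tendsto).symm

theorem finite_preimage_one_div_abs (c : ℝ) : ((fun y : ℝ => 1 / |y|) ⁻¹' {c}).Finite := by
  refine (toFinite {c⁻¹, -c⁻¹}).subset fun y hy => ?_
  have hy' : 1 / |y| = c := hy
  have habs : |y| = c⁻¹ := by rw [← hy', one_div, inv_inv]
  rcases abs_choice y with h | h
  · exact Or.inl (by rw [← habs, h])
  · exact Or.inr (by rw [mem_singleton_iff, ← habs, h, neg_neg])

theorem countable_preimage_T (α : ℝ) {S : Set ℝ} (hS : S.Countable) : (T α ⁻¹' S).Countable := by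
  refine (((countable_singleton 0).union (hS.biUnion fun c _ => countable_iUnion fun k : ℤ =>
    (finite_preimage_one_div_abs (c + k)).countable))).mono fun y hy => ?_
  by_cases hy0 : y = 0
  · exact Or.inl hy0
  · refine Or.inr (mem_biUnion hy (mem_iUnion.mpr ⟨⌊1 / |y| + 1 - α⌋, ?_⟩))
    simp [T, hy0]

theorem countable_preimage_iterate_T (α : ℝ) {S : Set ℝ} (hS : S.Countable) (j : ℕ) :
    ((T α)^[j] ⁻¹' S).Countable := by
  induction j with
  | zero => exact hS
  | succ j ih => rw [Function.iterate_succ, preimage_comp]; exact countable_preimage_T α ih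

theorem countable_singularSet (α : ℝ) : (singularSet α).Countable := by
  refine ((countable_singleton 0).union (countable_iUnion fun m : ℤ =>
    (finite_preimage_one_div_abs (m - 1 + α)).countable)).mono fun y hy => ?_
  rcases hy with hy | ⟨m, hm⟩
  · exact Or.inl hy
  · exact Or.inr (mem_iUnion.mpr ⟨m, by simp only [mem_preimage, mem_singleton_iff]; linarith⟩)

theorem deriv_g_le_general (α : ℝ) (hα : α ∈ Ioo (0:ℝ) 1) (n : ℕ)
    (U : Set ℝ) (hU : IsOpen U) (hUI : U ⊆ Icc (α - 1) α)
    (hsm : ContDiffOn ℝ 2 ((T α)^[n]) U)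
    (hd : ∀ x ∈ U, deriv ((T α)^[n]) x ≠ 0) :
    ∀ x ∈ U, |deriv (fun y => 1 / |deriv ((T α)^[n]) y|) x|
      ≤ 2 / (1 - max (α ^ 2) ((α - 1) ^ 2)) := by
  intro x hx
  set f := (T α)^[n]
  have hf' : ContDiffOn ℝ 1 (deriv f) U := hsm.deriv_of_isOpen hU (by norm_num)
  have hf'' : HasDerivAt (deriv f) (deriv (deriv f) x) x :=
    ((hf'.differentiableOn one_ne_zero).differentiableAt (hU.mem_nhds hx)).hasDerivAt
  have hf''_cont : ContinuousAt (deriv (deriv f)) x :=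
    (hf'.continuousOn_deriv_of_isOpen hU le_rfl).continuousAt (hU.mem_nhds hx)
  have hsing : (⋃ j, (T α)^[j] ⁻¹' singularSet α).Countable :=
    countable_iUnion (countable_preimage_iterate_T α (countable_singularSet α))
  have hx0 : 0 < deriv f x ^ 2 := by have := hd x hx; positivity
  rw [abs_deriv_one_div_abs hf'' (hd x hx), div_le_iff₀ hx0]
  refine le_of_eventually_le_of_dense_compl (hsing.dense_compl ℝ) hf''_cont.abs
    (continuousAt_const.mul (hf''.continuousAt.pow 2)) ?_
  filter_upwards [hU.mem_nhds hx] with y hy hgood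
  exact (distortionLE_iterate_T hα (hUI hy) (fun j hj => hgood (mem_iUnion_of_mem j hj)) n)
    |>.abs_deriv_deriv_le

/-- for every `α ∈ (0,1)` and `n ≥ 1`, on the interior of each cylinder of
`𝒫_n` (an open set on which `T_α^n` is smooth with nonvanishing derivative) the derivative
of `g_{n,α} = 1/|(T_α^n)'|` is bounded by `2/(1-γ_α)`, `γ_α = max{α², (α-1)²}`. -/
theorem deriv_g_le (α : ℝ) (hα : α ∈ Ioo (0:ℝ) 1) (n : ℕ) (hn : 1 ≤ n)
    (U : Set ℝ) (hU : IsOpen U) (hUI : U ⊆ Icc (α - 1) α)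
    (hsm : ContDiffOn ℝ 2 ((T α)^[n]) U)
    (hd : ∀ x ∈ U, deriv ((T α)^[n]) x ≠ 0) :
    ∀ x ∈ U, |deriv (fun y => 1 / |deriv ((T α)^[n]) y|) x|
      ≤ 2 / (1 - max (α ^ 2) ((α - 1) ^ 2)) :=
  deriv_g_le_general α hα n U hU hUI hsm hd
end

section
/- There exists a universal constant C₀ such that for every α ∈ (0,1), the total variation on [α−1, α] of the function g_{1,α} (equal to x² on the interior of every cylinder of 𝒫_1 and 0 on the boundary points of cylinders) is at most C₀. -/
/-!
Write `g1 α x = x ^ 2 - d x`, where the defect `d` vanishes except at the endpoints `α - 1`, `α`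
and at the branch points `x = ±1 / (j + α)`. The square has variation at most `2` on `[-1, 1]`,
and the variation of any function is at most twice the supremum of its finite sums of absolute
values. At a branch point, `|x|⁻¹ = |j + α|` has fractional part `α` or `1 - α`, so `x` is
determined by its sign, by which of the two it is, and by `k = ⌊|x|⁻¹⌋ ≥ 1`, while
`x ^ 2 ≤ 1 / k ^ 2`. Hence every finite sum of the defect is at most `2 + 4 ζ(2)`, uniformly in `α`.
-/

open Set
open scoped ENNReal Classical

/-- The function `g_{1,α}`: equal to `x²` on the interior of each cylinder of `𝒫_1`
(i.e. away from `0`, from the branch endpoints `±1/(j+α)` and from the boundary),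
and `0` elsewhere. -/
noncomputable def g1 (α : ℝ) (x : ℝ) : ℝ :=
  if x ∈ Ioo (α - 1) α ∧ x ≠ 0 ∧ ∀ j : ℤ, x ≠ 1 / (j + α) ∧ x ≠ -(1 / (j + α))
  then x ^ 2 else 0

open Finset in
theorem eVariationOn_sub_le {α E : Type*} [LinearOrder α] [SeminormedAddCommGroup E]
    (f g : α → E) (s : Set α) :
    eVariationOn (f - g) s ≤ eVariationOn f s + eVariationOn g s := by
  refine iSup_le fun ⟨n, u, hu, us⟩ => ?_
  calc ∑ i ∈ Finset.range n, edist ((f - g) (u (i + 1))) ((f - g) (u i))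
      ≤ ∑ i ∈ Finset.range n,
          (edist (f (u (i + 1))) (f (u i)) + edist (g (u (i + 1))) (g (u i))) := by
        gcongr with i
        simp only [Pi.sub_apply, edist_eq_enorm_sub, sub_sub_sub_comm]
        exact enorm_sub_le
    _ ≤ eVariationOn f s + eVariationOn g s := by
        rw [sum_add_distrib]
        exact add_le_add (eVariationOn.sum_le hu us) (eVariationOn.sum_le hu us)

open Finset in
theorem eVariationOn_le_two_mul_of_sum_enorm_le {α E : Type*} [LinearOrder α]
    [SeminormedAddCommGroup E] {f : α → E} {s : Set α} {M : ℝ≥0∞}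
    (hM : ∀ t : Finset α, ↑t ⊆ s → ∑ x ∈ t, ‖f x‖ₑ ≤ M) :
    eVariationOn f s ≤ 2 * M := by
  rw [eVariationOn.eVariationOn_eq_strictMonoOn]
  refine iSup_le fun ⟨n, u, hu, us⟩ => ?_
  -- the sample points are distinct, so each value of `f` is counted once
  have hvalues : ∑ i ∈ Finset.range (n + 1), ‖f (u i)‖ₑ ≤ M := by
    have hrange : ∀ i ∈ Finset.range (n + 1), i ∈ Set.Iic n := by simp
    rw [← sum_image (f := fun x => ‖f x‖ₑ) (hu.injOn.mono hrange)]
    refine hM _ fun x hx => ?_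
    obtain ⟨i, hi, rfl⟩ := Finset.mem_image.1 hx
    exact us i (hrange i hi)
  calc ∑ i ∈ Finset.range n, edist (f (u (i + 1))) (f (u i))
      ≤ ∑ i ∈ Finset.range n, (‖f (u (i + 1))‖ₑ + ‖f (u i)‖ₑ) := by
        gcongr with i
        rw [edist_eq_enorm_sub]
        exact enorm_sub_le
    _ ≤ M + M := by
        rw [sum_add_distrib]
        gcongr
        · exact (sum_range_succ' (fun i => ‖f (u i)‖ₑ) n ▸ le_self_add).trans hvalues
        · exact (sum_range_succ (fun i => ‖f (u i)‖ₑ) n ▸ le_self_add).trans hvalues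
    _ = 2 * M := (two_mul M).symm

theorem eVariationOn_sq_Icc_neg_one_one_le :
    eVariationOn (fun x : ℝ => x ^ 2) (Icc (-1) 1) ≤ 2 := by
  have hright : eVariationOn (fun x : ℝ => x ^ 2) (Icc 0 1) = 1 := by
    have hmono : MonotoneOn (fun x : ℝ => x ^ 2) (Icc 0 1) :=
      pow_left_monotoneOn.mono fun x hx => hx.1
    simpa using hmono.eVariationOn_eq (a := 0) (b := 1) (by simp) (by simp)
  have hleft : eVariationOn (fun x : ℝ => x ^ 2) (Icc (-1) 0) ≤ 1 := by
    calc eVariationOn (fun x : ℝ => x ^ 2) (Icc (-1) 0)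
        = eVariationOn ((fun x : ℝ => x ^ 2) ∘ Neg.neg) (Icc (-1) 0) := by
          simp only [Function.comp_def, neg_sq]
      _ ≤ eVariationOn (fun x : ℝ => x ^ 2) (Icc 0 1) :=
          eVariationOn.comp_le_of_antitoneOn _ _ (fun _ _ _ _ h => neg_le_neg h)
            fun x hx => ⟨by linarith [hx.2], by linarith [hx.1]⟩
      _ = 1 := hright
  have hsplit := eVariationOn.Icc_add_Icc (fun x : ℝ => x ^ 2) (s := univ)
    (show (-1 : ℝ) ≤ 0 by norm_num) zero_le_one (mem_univ 0)
  simp only [univ_inter] at hsplit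
  rw [← hsplit, hright]
  exact (add_le_add_left hleft 1).trans_eq one_add_one_eq_two

open Finset Real in
theorem sum_sq_le_of_fract_inv_abs_mem {a b : ℝ} (B : Finset ℝ)
    (hB : ∀ x ∈ B, 1 ≤ |x|⁻¹ ∧ (Int.fract |x|⁻¹ = a ∨ Int.fract |x|⁻¹ = b)) :
    ∑ x ∈ B, x ^ 2 ≤ 4 * (π ^ 2 / 6) := by
  set k : ℝ → ℕ := fun x => ⌊|x|⁻¹⌋₊
  have hk : ∀ x, (k x : ℝ) + Int.fract |x|⁻¹ = |x|⁻¹ := fun x => by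
    rw [natCast_floor_eq_intCast_floor (by positivity), Int.floor_add_fract]
  let ι : ℝ → Bool × Bool × ℕ := fun x => (decide (0 < x), decide (Int.fract |x|⁻¹ = a), k x)
  have hinj : Set.InjOn ι B := by
    intro x hx y hy hxy
    simp only [ι, Prod.mk.injEq, decide_eq_decide] at hxy
    obtain ⟨hsign, hfract, hfloor⟩ := hxy
    have hfract_eq : Int.fract |x|⁻¹ = Int.fract |y|⁻¹ := by
      grind
    have habs : |x| = |y| := inv_inj.1 (by rw [← hk x, ← hk y, hfloor, hfract_eq])
    have hx0 : x ≠ 0 := by rintro rfl; exact absurd (hB 0 hx).1 (by norm_num)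
    rcases abs_eq_abs.1 habs with h | h
    · exact h
    · grind
  have hsq : ∀ x ∈ B, x ^ 2 ≤ 1 / (k x : ℝ) ^ 2 := by
    intro x hx
    have hk1 : (1 : ℝ) ≤ k x := by exact_mod_cast Nat.le_floor (by simpa using (hB x hx).1)
    have hkx : (k x : ℝ) ≤ |x|⁻¹ := Nat.floor_le (by positivity)
    calc x ^ 2 = 1 / (|x|⁻¹) ^ 2 := by rw [inv_pow, one_div, inv_inv, sq_abs]
      _ ≤ 1 / (k x : ℝ) ^ 2 := by gcongr
  calc ∑ x ∈ B, x ^ 2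
      ≤ ∑ x ∈ B, 1 / (k x : ℝ) ^ 2 := sum_le_sum hsq
    _ = ∑ p ∈ B.image ι, 1 / (p.2.2 : ℝ) ^ 2 := 
        (sum_image (f := fun p => 1 / (p.2.2 : ℝ) ^ 2) hinj).symm
    _ ≤ ∑ p ∈ Finset.univ ×ˢ Finset.univ ×ˢ B.image k, 1 / (p.2.2 : ℝ) ^ 2 := by
        refine sum_le_sum_of_subset_of_nonneg ?_ fun _ _ _ => by positivity
        intro p hp
        obtain ⟨x, hx, rfl⟩ := Finset.mem_image.1 hp
        exact mem_product.2 ⟨mem_univ _, mem_product.2 ⟨mem_univ _, mem_image_of_mem k hx⟩⟩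
    _ = 4 * ∑ n ∈ B.image k, 1 / (n : ℝ) ^ 2 := by
        simp only [sum_product, sum_const, card_univ, Fintype.card_bool, nsmul_eq_mul]
        ring
    _ ≤ 4 * (π ^ 2 / 6) := by
        gcongr
        exact sum_le_hasSum _ (fun _ _ => by positivity) hasSum_zeta_two

def IsBranchPoint (α x : ℝ) : Prop :=
  ∃ j : ℤ, x = 1 / (j + α) ∨ x = -(1 / (j + α))

theorem IsBranchPoint.fract_inv_abs_eq {α x : ℝ} (hα : α ∈ Ioo 0 1) (hx : IsBranchPoint α x) :
    Int.fract |x|⁻¹ = α ∨ Int.fract |x|⁻¹ = 1 - α := by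
  obtain ⟨j, hj⟩ := hx
  have hinv : |x|⁻¹ = |(j : ℝ) + α| := by
    rcases hj with rfl | rfl <;> simp [abs_inv]
  rw [hinv]
  rcases le_or_gt 0 ((j : ℝ) + α) with h | h
  · left
    rw [abs_of_nonneg h, Int.fract_intCast_add, Int.fract_eq_self.2 ⟨hα.1.le, hα.2⟩]
  · right
    rw [abs_of_neg h, show -((j : ℝ) + α) = ((-j - 1 : ℤ) : ℝ) + (1 - α) by push_cast; ring,
      Int.fract_intCast_add, Int.fract_eq_self.2 ⟨by linarith [hα.2], by linarith [hα.1]⟩]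

theorem sq_sub_g1_le {α x : ℝ} (hα : α ∈ Ioo 0 1) (hx : x ∈ Icc (α - 1) α) :
    x ^ 2 - g1 α x ≤ (if x = α - 1 ∨ x = α then 1 else 0) +
      if IsBranchPoint α x then x ^ 2 else 0 := by
  unfold g1
  by_cases hgood : x ∈ Ioo (α - 1) α ∧ x ≠ 0 ∧ ∀ j : ℤ, x ≠ 1 / (j + α) ∧ x ≠ -(1 / (j + α))
  · rw [if_pos hgood, sub_self]
    split_ifs <;> positivity
  rw [if_neg hgood, sub_zero]
  by_cases hend : x = α - 1 ∨ x = α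
  · have habs : |x| ≤ 1 := abs_le.2 ⟨by linarith [hx.1, hα.1], by linarith [hx.2, hα.2]⟩
    have hsq : x ^ 2 ≤ 1 := by nlinarith [abs_nonneg x, sq_abs x]
    rw [if_pos hend]
    split_ifs <;> nlinarith
  by_cases hbranch : IsBranchPoint α x
  · rw [if_neg hend, if_pos hbranch, zero_add]
  have hx0 : x = 0 := by
    push Not at hend
    simp only [IsBranchPoint, not_exists, not_or] at hbranch
    by_contra hx0
    exact hgood ⟨⟨lt_of_le_of_ne hx.1 (Ne.symm hend.1), lt_of_le_of_ne hx.2 hend.2⟩, hx0, hbranch⟩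
  rw [if_neg hend, if_neg hbranch, hx0]
  norm_num

open Real in
theorem sum_sq_sub_g1_le {α : ℝ} (hα : α ∈ Ioo 0 1) (F : Finset ℝ) (hF : ↑F ⊆ Icc (α - 1) α) :
    ∑ x ∈ F, (x ^ 2 - g1 α x) ≤ 2 + 4 * (π ^ 2 / 6) := by
  have hbranch : ∀ x ∈ F.filter (IsBranchPoint α),
      1 ≤ |x|⁻¹ ∧ (Int.fract |x|⁻¹ = α ∨ Int.fract |x|⁻¹ = 1 - α) := by
    intro x hx
    obtain ⟨hxF, hxB⟩ := Finset.mem_filter.1 hx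
    have hfract := hxB.fract_inv_abs_eq hα
    have hx0 : x ≠ 0 := by
      rintro rfl
      rcases hfract with h | h <;> simp at h <;> linarith [hα.1, hα.2]
    have habs : |x| ≤ 1 :=
      abs_le.2 ⟨by linarith [(hF hxF).1, hα.1], by linarith [(hF hxF).2, hα.2]⟩
    exact ⟨(one_le_inv₀ (abs_pos.2 hx0)).2 habs, hfract⟩
  calc ∑ x ∈ F, (x ^ 2 - g1 α x)
      ≤ ∑ x ∈ F, ((if x = α - 1 ∨ x = α then 1 else 0) +
          if IsBranchPoint α x then x ^ 2 else 0) :=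
        Finset.sum_le_sum fun x hx => sq_sub_g1_le hα (hF hx)
    _ = (F.filter (fun x => x = α - 1 ∨ x = α)).card +
          ∑ x ∈ F.filter (IsBranchPoint α), x ^ 2 := by
        rw [Finset.sum_add_distrib, Finset.sum_boole, Finset.sum_filter]
    _ ≤ 2 + 4 * (π ^ 2 / 6) := by
        gcongr
        · have hsub : F.filter (fun x => x = α - 1 ∨ x = α) ⊆ {α - 1, α} := fun x hx => by
            simpa using (Finset.mem_filter.1 hx).2
          exact_mod_cast (Finset.card_le_card hsub).trans Finset.card_le_two
        · exact sum_sq_le_of_fract_inv_abs_mem _ hbranch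

open Real in
theorem eVariationOn_sq_sub_g1_le {α : ℝ} (hα : α ∈ Ioo 0 1) :
    eVariationOn (fun x => x ^ 2 - g1 α x) (Icc (α - 1) α) ≤
      2 * ENNReal.ofReal (2 + 4 * (π ^ 2 / 6)) := by
  refine eVariationOn_le_two_mul_of_sum_enorm_le fun F hF => ?_
  have hnonneg : ∀ x, 0 ≤ x ^ 2 - g1 α x := fun x => by
    unfold g1
    split_ifs <;> simp [sq_nonneg]
  calc ∑ x ∈ F, ‖x ^ 2 - g1 α x‖ₑ = ENNReal.ofReal (∑ x ∈ F, (x ^ 2 - g1 α x)) := by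
        rw [ENNReal.ofReal_sum_of_nonneg fun x _ => hnonneg x]
        exact Finset.sum_congr rfl fun x _ => Real.enorm_of_nonneg (hnonneg x)
    _ ≤ _ := ENNReal.ofReal_le_ofReal (sum_sq_sub_g1_le hα F hF)

/-- there is a universal finite constant `C₀` bounding
`var_{[α-1,α]} g_{1,α}` for every `α ∈ (0,1)`. -/
theorem var_g1_uniformly_bounded :
    ∃ C₀ : ℝ≥0∞, C₀ < ⊤ ∧ ∀ α ∈ Ioo (0:ℝ) 1,
      eVariationOn (g1 α) (Icc (α - 1) α) ≤ C₀ := by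
  refine ⟨2 + 2 * ENNReal.ofReal (2 + 4 * (Real.pi ^ 2 / 6)), by finiteness, fun α hα => ?_⟩
  have hsq : eVariationOn (fun x : ℝ => x ^ 2) (Icc (α - 1) α) ≤ 2 :=
    (eVariationOn.mono _ (Icc_subset_Icc (by linarith [hα.1]) hα.2.le)).trans
      eVariationOn_sq_Icc_neg_one_one_le
  calc eVariationOn (g1 α) (Icc (α - 1) α)
      = eVariationOn ((fun x => x ^ 2) - fun x => x ^ 2 - g1 α x) (Icc (α - 1) α) := by
        congr 1
        ext x
        simp
    _ ≤ _ := (eVariationOn_sub_le _ _ _).trans (add_le_add hsq (eVariationOn_sq_sub_g1_le hα))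
end

section
/- Let α ∈ (0,1], 0 < δ < 1, and K > max{1/α, 1/(1−α)} (K ≥ 1 if α = 1). Then there exists A > 0 such that every f ∈ B_{K,δ} (with representative of finite K,δ-norm) satisfies |f(x)| ≤ A·‖f‖_{K,δ}/|x|^δ for all x ∈ [α−1, α] ∖ {0}. -/
/-!
Given `x ≠ 0`, pick `k ≥ K` with `1 ≤ |x| k ≤ K + 2`. Then `x` lies in the piece `L_k^±` of its
sign, whose length is at least that of `L_K^±`, a positive constant `c`. On an interval a function
of bounded variation differs from its mean by at most its variation, so
`|f x| ≤ var_{L_k^±} f + c⁻¹ ∫_{L_k} |f| ≤ (k^δ + c⁻¹) ‖f‖_{K,δ}`, and `k^δ ≤ (K + 2)^δ / |x|^δ`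
while `1 ≤ 1 / |x|^δ`.
-/

open Set MeasureTheory
open scoped ENNReal

/-- The `(K,δ)`-norm of a function on `I_α = [α-1, α]`:
`sup_{k ≥ K} ( k^{-δ} var_{L_k} g + ∫_{L_k} |g| )`, where
`L_k = [α-1, -1/(k+α)] ∪ [1/(k+α), α]`. -/
noncomputable def kdNorm (α : ℝ) (K : ℕ) (δ : ℝ) (g : ℝ → ℝ) : ℝ≥0∞ :=
  ⨆ k : ℕ, ⨆ _ : K ≤ k,
    (ENNReal.ofReal ((k : ℝ) ^ (-δ)) *
        (eVariationOn g (Icc (1 / (k + α)) α) + eVariationOn g (Icc (α - 1) (-(1 / (k + α))))) +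
      ENNReal.ofReal (∫ x in Icc (α - 1) (-(1 / (k + α))) ∪ Icc (1 / (k + α)) α, |g x|))

theorem BoundedVariationOn.integrableOn_Icc {f : ℝ → ℝ} {a b : ℝ}
    (hf : BoundedVariationOn f (Icc a b)) : IntegrableOn f (Icc a b) := by
  obtain ⟨p, q, hp, hq, rfl⟩ := hf.locallyBoundedVariationOn.exists_monotoneOn_sub_monotoneOn
  exact (hp.integrableOn_isCompact isCompact_Icc).sub (hq.integrableOn_isCompact isCompact_Icc)

theorem abs_mul_measureReal_le_eVariationOn_add_setIntegral {X : Type*} [LinearOrder X]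
    [MeasurableSpace X] {μ : Measure X} {f : X → ℝ} {s : Set X} {x : X} (hx : x ∈ s)
    (hs : MeasurableSet s) (hμs : μ s ≠ ∞) (hf : IntegrableOn f s μ)
    (hvar : BoundedVariationOn f s) :
    |f x| * μ.real s ≤ (eVariationOn f s).toReal * μ.real s + ∫ y in s, |f y| ∂μ := by
  have hconst (c : ℝ) : IntegrableOn (fun _ ↦ c) s μ := integrableOn_const hμs
  have hpointwise : ∀ y ∈ s, |f x| ≤ (eVariationOn f s).toReal + |f y| := fun y hy ↦ by
    have hdist : dist (f x) (f y) ≤ (eVariationOn f s).toReal := by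
      rw [dist_edist]; exact ENNReal.toReal_mono hvar (eVariationOn.edist_le f hx hy)
    linarith [abs_sub_abs_le_abs_sub (f x) (f y), Real.dist_eq (f x) (f y)]
  have := setIntegral_mono_on (g := fun y ↦ (eVariationOn f s).toReal + |f y|) (hconst _)
    ((hconst _).add hf.abs) hs hpointwise
  rwa [integral_add (hconst _) hf.abs, setIntegral_const, setIntegral_const, smul_eq_mul,
    smul_eq_mul, mul_comm, mul_comm (μ.real s)] at this

theorem abs_le_eVariationOn_add_setIntegral_div {f : ℝ → ℝ} {a b x : ℝ} (hx : x ∈ Icc a b)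
    (hab : a < b) (hvar : BoundedVariationOn f (Icc a b)) :
    |f x| ≤ (eVariationOn f (Icc a b)).toReal + (∫ y in Icc a b, |f y|) / (b - a) := by
  have h := abs_mul_measureReal_le_eVariationOn_add_setIntegral hx measurableSet_Icc
    measure_Icc_lt_top.ne hvar.integrableOn_Icc hvar
  rw [Real.volume_real_Icc_of_le hab.le] at h
  rw [← sub_le_iff_le_add', le_div_iff₀ (sub_pos.2 hab)]
  linarith

theorem exists_nat_ge_mul_mem_Icc (K : ℕ) {t : ℝ} (ht0 : 0 < t) (ht1 : t ≤ 1) :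
    ∃ k : ℕ, K ≤ k ∧ t * k ∈ Icc 1 ((K : ℝ) + 2) := by
  refine ⟨max K ⌈t⁻¹⌉₊, le_max_left _ _, ?_, ?_⟩
  · calc 1 = t * t⁻¹ := (mul_inv_cancel₀ ht0.ne').symm
      _ ≤ t * (max K ⌈t⁻¹⌉₊ : ℕ) := by
        gcongr; exact (Nat.le_ceil _).trans (mod_cast le_max_right _ _)
  · have hceil : (⌈t⁻¹⌉₊ : ℝ) < t⁻¹ + 1 := Nat.ceil_lt_add_one (inv_nonneg.2 ht0.le)
    have hmax : ((max K ⌈t⁻¹⌉₊ : ℕ) : ℝ) ≤ K + (t⁻¹ + 1) := by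
      push_cast; exact max_le (by linarith) (by linarith [(Nat.cast_nonneg K : (0:ℝ) ≤ K)])
    calc t * (max K ⌈t⁻¹⌉₊ : ℕ) ≤ t * (K + (t⁻¹ + 1)) := by gcongr
      _ = t * K + 1 + t := by field_simp; ring
      _ ≤ K + 2 := by nlinarith [(Nat.cast_nonneg K : (0:ℝ) ≤ K)]

theorem one_div_add_lt_of_one_div_lt {a b K : ℝ} (ha : 0 < a) (hb : 0 ≤ b) (h : 1 / a < K) :
    1 / (K + b) < a := by
  have hK : 0 < K := (one_div_pos.2 ha).trans h
  calc 1 / (K + b) ≤ 1 / K := one_div_le_one_div_of_le hK (le_add_of_nonneg_right hb)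
    _ < a := (one_div_lt ha hK).1 h

theorem one_div_natCast_add_lt {α : ℝ} {K : ℕ} (hα : α ∈ Ioc 0 1) (hK1 : α < 1 → 1 / α < K)
    (hK2 : α = 1 → 1 ≤ K) : 1 / (K + α) < α := by
  rcases hα.2.lt_or_eq with h | rfl
  · exact one_div_add_lt_of_one_div_lt hα.1 hα.1.le (hK1 h)
  · rw [div_lt_one (by positivity)]
    linarith [(Nat.one_le_cast.2 (hK2 rfl) : (1 : ℝ) ≤ K)]

local notation "L⁺[" α ", " k "]" => Icc (1 / ((k : ℝ) + α)) α
local notation "L⁻[" α ", " k "]" => Icc (α - 1) (-(1 / ((k : ℝ) + α)))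

section kdNorm

variable {α δ : ℝ} {K k : ℕ} {g : ℝ → ℝ}

theorem le_kdNorm (hk : K ≤ k) :
    ENNReal.ofReal ((k : ℝ) ^ (-δ)) * (eVariationOn g L⁺[α, k] + eVariationOn g L⁻[α, k]) +
      ENNReal.ofReal (∫ x in L⁻[α, k] ∪ L⁺[α, k], |g x|) ≤ kdNorm α K δ g :=
  le_iSup₂ (f := fun k (_ : K ≤ k) ↦ ENNReal.ofReal ((k : ℝ) ^ (-δ)) *
      (eVariationOn g L⁺[α, k] + eVariationOn g L⁻[α, k]) +
      ENNReal.ofReal (∫ x in L⁻[α, k] ∪ L⁺[α, k], |g x|)) k hk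

theorem eVariationOn_add_le_kdNorm (hk : K ≤ k) (hk0 : 0 < k) :
    eVariationOn g L⁺[α, k] + eVariationOn g L⁻[α, k] ≤
      ENNReal.ofReal ((k : ℝ) ^ δ) * kdNorm α K δ g := by
  have hk0' : (0 : ℝ) < k := Nat.cast_pos.2 hk0
  have hone : ENNReal.ofReal ((k : ℝ) ^ δ) * ENNReal.ofReal ((k : ℝ) ^ (-δ)) = 1 := by
    rw [← ENNReal.ofReal_mul (Real.rpow_nonneg hk0'.le _), ← Real.rpow_add hk0', add_neg_cancel,
      Real.rpow_zero, ENNReal.ofReal_one]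
  calc eVariationOn g L⁺[α, k] + eVariationOn g L⁻[α, k]
      = ENNReal.ofReal ((k : ℝ) ^ δ) * (ENNReal.ofReal ((k : ℝ) ^ (-δ)) *
          (eVariationOn g L⁺[α, k] + eVariationOn g L⁻[α, k])) := by
        rw [← mul_assoc, hone, one_mul]
    _ ≤ ENNReal.ofReal ((k : ℝ) ^ δ) * kdNorm α K δ g := by
        gcongr; exact le_self_add.trans (le_kdNorm hk)

theorem boundedVariationOn_of_kdNorm_ne_top (hfin : kdNorm α K δ g ≠ ⊤) (hk : K ≤ k)
    (hk0 : 0 < k) : BoundedVariationOn g L⁺[α, k] ∧ BoundedVariationOn g L⁻[α, k] :=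
  ENNReal.add_ne_top.1 <| ne_top_of_le_ne_top (ENNReal.mul_ne_top ENNReal.ofReal_ne_top hfin)
    (eVariationOn_add_le_kdNorm hk hk0)

theorem toReal_eVariationOn_add_le_kdNorm (hfin : kdNorm α K δ g ≠ ⊤) (hk : K ≤ k)
    (hk0 : 0 < k) :
    (eVariationOn g L⁺[α, k]).toReal + (eVariationOn g L⁻[α, k]).toReal ≤
      (k : ℝ) ^ δ * (kdNorm α K δ g).toReal := by
  obtain ⟨hplus, hminus⟩ := boundedVariationOn_of_kdNorm_ne_top hfin hk hk0
  have := ENNReal.toReal_mono (ENNReal.mul_ne_top ENNReal.ofReal_ne_top hfin)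
    (eVariationOn_add_le_kdNorm hk hk0)
  rwa [ENNReal.toReal_add hplus hminus, ENNReal.toReal_mul,
    ENNReal.toReal_ofReal (Real.rpow_nonneg (Nat.cast_nonneg k) _)] at this

theorem setIntegral_abs_le_kdNorm (hfin : kdNorm α K δ g ≠ ⊤) (hk : K ≤ k) :
    ∫ x in L⁻[α, k] ∪ L⁺[α, k], |g x| ≤ (kdNorm α K δ g).toReal :=
  (ENNReal.ofReal_le_iff_le_toReal hfin).1 (le_add_self.trans (le_kdNorm hk))

theorem abs_apply_le_kdNorm_of_mem_Icc (hfin : kdNorm α K δ g ≠ ⊤) (hk : K ≤ k) (hk0 : 0 < k)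
    {a b c x : ℝ} (hpiece : Icc a b = L⁺[α, k] ∨ Icc a b = L⁻[α, k]) (hx : x ∈ Icc a b)
    (hc : 0 < c) (hcab : c ≤ b - a) :
    |g x| ≤ (k : ℝ) ^ δ * (kdNorm α K δ g).toReal + (kdNorm α K δ g).toReal / c := by
  obtain ⟨hplus, hminus⟩ := boundedVariationOn_of_kdNorm_ne_top hfin hk hk0
  have hbv : BoundedVariationOn g (Icc a b) := by rcases hpiece with h | h <;> rwa [h]
  have hvar : (eVariationOn g (Icc a b)).toReal ≤ (k : ℝ) ^ δ * (kdNorm α K δ g).toReal := by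
    have hsum := toReal_eVariationOn_add_le_kdNorm hfin hk hk0
    have hplus_nonneg : 0 ≤ (eVariationOn g L⁺[α, k]).toReal := ENNReal.toReal_nonneg
    have hminus_nonneg : 0 ≤ (eVariationOn g L⁻[α, k]).toReal := ENNReal.toReal_nonneg
    rcases hpiece with h | h <;> rw [h] <;> linarith
  have hsub : Icc a b ⊆ L⁻[α, k] ∪ L⁺[α, k] := by
    rcases hpiece with h | h <;> rw [h]
    exacts [subset_union_right, subset_union_left]
  have hint : ∫ y in Icc a b, |g y| ≤ (kdNorm α K δ g).toReal :=
    (setIntegral_mono_set (hminus.integrableOn_Icc.union hplus.integrableOn_Icc).abs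
      (.of_forall fun _ ↦ abs_nonneg _) hsub.eventuallyLE).trans
      (setIntegral_abs_le_kdNorm hfin hk)
  calc |g x| ≤ (eVariationOn g (Icc a b)).toReal + (∫ y in Icc a b, |g y|) / (b - a) :=
        abs_le_eVariationOn_add_setIntegral_div hx (sub_pos.1 (hc.trans_le hcab)) hbv
    _ ≤ _ := add_le_add hvar (div_le_div₀ ENNReal.toReal_nonneg hint hc hcab)

theorem abs_apply_le_kdNorm_of_ne_zero (hfin : kdNorm α K δ g ≠ ⊤) (hα : 0 < α)
    (hplus : 1 / (K + α) < α) (hminus : α < 1 → 1 / (K + α) < 1 - α) (hk : K ≤ k) {x : ℝ}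
    (hxk : 1 ≤ |x| * k) (hx : x ∈ Icc (α - 1) α) (hx0 : x ≠ 0) :
    |g x| ≤ (k : ℝ) ^ δ * (kdNorm α K δ g).toReal +
      max (1 / (α - 1 / (K + α))) (1 / (1 - α - 1 / (K + α))) * (kdNorm α K δ g).toReal := by
  have hk0 : 0 < k := Nat.pos_of_ne_zero (by rintro rfl; norm_num at hxk)
  have hshrink : 1 / (k + α) ≤ 1 / (K + α) :=
    one_div_le_one_div_of_le (by positivity) (by gcongr)
  have hxk' : 1 / (k + α) ≤ |x| := by
    rw [div_le_iff₀ (by positivity)]; nlinarith [abs_nonneg x]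
  rcases hx0.lt_or_gt with hneg | hpos
  · rw [abs_of_neg hneg] at hxk'
    have hα1 : α < 1 := by linarith [hx.1]
    refine (abs_apply_le_kdNorm_of_mem_Icc hfin hk hk0 (Or.inr rfl) ⟨hx.1, by linarith⟩
      (sub_pos.2 (hminus hα1)) (by linarith)).trans ?_
    rw [← one_div_mul_eq_div (1 - α - _)]
    gcongr
    exact le_max_right _ _
  · rw [abs_of_pos hpos] at hxk'
    refine (abs_apply_le_kdNorm_of_mem_Icc hfin hk hk0 (Or.inl rfl) ⟨hxk', hx.2⟩
      (sub_pos.2 hplus) (by linarith)).trans ?_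
    rw [← one_div_mul_eq_div (α - _)]
    gcongr
    exact le_max_left _ _

end kdNorm

/-- for `α ∈ (0,1]`, `0 < δ < 1` and `K > max{1/α, 1/(1-α)}` (`K ≥ 1` when
`α = 1`), there is `A > 0` with `|f(x)| ≤ A ‖f‖_{K,δ} / |x|^δ` for every `f ∈ B_{K,δ}`
and every `x ∈ [α-1, α] \ {0}`. -/
theorem BKdelta_pointwise_bound (α : ℝ) (hα : α ∈ Ioc (0:ℝ) 1)
    (δ : ℝ) (hδ : δ ∈ Ioo (0:ℝ) 1) (K : ℕ)
    (hK1 : α < 1 → 1 / α < K ∧ 1 / (1 - α) < K) (hK2 : α = 1 → 1 ≤ K) :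
    ∃ A > 0, ∀ f : ℝ → ℝ, kdNorm α K δ f ≠ ⊤ →
      ∀ x ∈ Icc (α - 1) α, x ≠ 0 →
        |f x| ≤ A * (kdNorm α K δ f).toReal / |x| ^ δ := by
  have hplus : 1 / (K + α) < α := one_div_natCast_add_lt hα (fun h ↦ (hK1 h).1) hK2
  have hminus : α < 1 → 1 / (K + α) < 1 - α := fun h ↦
    one_div_add_lt_of_one_div_lt (sub_pos.2 h) hα.1.le (hK1 h).2
  set M := max (1 / (α - 1 / (K + α))) (1 / (1 - α - 1 / (K + α)))
  have hM : 0 ≤ M := (one_div_pos.2 (sub_pos.2 hplus)).le.trans (le_max_left _ _)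
  refine ⟨(K + 2) ^ δ + M, add_pos_of_pos_of_nonneg (by positivity) hM,
    fun f hfin x hx hx0 ↦ ?_⟩
  have hx_pos : 0 < |x| := abs_pos.2 hx0
  have hx_le : |x| ≤ 1 := abs_le.2 ⟨by linarith [hx.1, hα.1], by linarith [hx.2, hα.2]⟩
  obtain ⟨k, hKk, hk1, hk2⟩ := exists_nat_ge_mul_mem_Icc K hx_pos hx_le
  have hkδ : (k : ℝ) ^ δ ≤ (K + 2) ^ δ / |x| ^ δ := by
    rw [← Real.div_rpow (by positivity) hx_pos.le]
    exact Real.rpow_le_rpow (Nat.cast_nonneg _) (by rwa [le_div_iff₀' hx_pos]) hδ.1.le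
  have hxδ : |x| ^ δ ≤ 1 := Real.rpow_le_one hx_pos.le hx_le hδ.1.le
  have hN : 0 ≤ (kdNorm α K δ f).toReal := ENNReal.toReal_nonneg
  calc |f x| ≤ (k : ℝ) ^ δ * (kdNorm α K δ f).toReal + M * (kdNorm α K δ f).toReal :=
        abs_apply_le_kdNorm_of_ne_zero hfin hα.1 hplus hminus hKk hk1 hx hx0
    _ ≤ (K + 2) ^ δ / |x| ^ δ * (kdNorm α K δ f).toReal +
          M * (kdNorm α K δ f).toReal / |x| ^ δ := by
        gcongr
        exact le_div_self (by positivity) (by positivity) hxδ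
    _ = ((K + 2) ^ δ + M) * (kdNorm α K δ f).toReal / |x| ^ δ := by ring
end

section
/- Let α ∈ (0,1), and suppose u : I_α → ℝ is such that u ∘ T_α has bounded variation on I_α. Since there are infinitely many full cylinders I_j ∈ 𝒫_1 (cylinders with T_α(I_j) = I_α), and var_{I_j}(u ∘ T_α) = var_{(α−1,α)} u for each full cylinder, it follows that u is constant almost everywhere on I_α. -/
open Set MeasureTheory

/-!
For every `n ≥ 1/α + 1` the branch `t ↦ 1/(t + n)` of `T_α⁻¹` maps `(α-1, α)` antitonically
onto a full cylinder inside `I_α`, so `u ∘ T_α` has variation `var_{(α-1,α)} u` on each of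
these infinitely many cylinders. They are ordered along the line, so these variations add up
below `var_{I_α} (u ∘ T_α) < ∞`, which forces `var_{(α-1,α)} u = 0`: `u` is constant on
`(α-1, α)`, hence a.e. on `I_α`.
-/

theorem eVariationOn.tsum_le_of_antitone_family {α E : Type*} [LinearOrder α]
    [PseudoEMetricSpace E] (f : α → E) {s : ℕ → Set α} {t : Set α} (hst : ∀ i, s i ⊆ t)
    (hs : ∀ i j, i < j → ∀ x ∈ s j, ∀ y ∈ s i, x ≤ y) :
    ∑' i, eVariationOn f (s i) ≤ eVariationOn f t := by
  refine ENNReal.tsum_le_of_sum_range_le fun N => ?_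
  suffices ∑ i ∈ Finset.range N, eVariationOn f (s i) ≤ eVariationOn f (⋃ i < N, s i) from
    this.trans (eVariationOn.mono f (iUnion₂_subset fun i _ => hst i))
  induction N with
  | zero => simp
  | succ N ih =>
    have hleft : ∀ x ∈ s N, ∀ y ∈ ⋃ i < N, s i, x ≤ y := by
      intro x hx y hy
      obtain ⟨i, hi, hy⟩ := mem_iUnion₂.mp hy
      exact hs i N hi x hx y hy
    have hunion : (⋃ i < N + 1, s i) = s N ∪ ⋃ i < N, s i := by
      ext x
      simp only [mem_iUnion, mem_union, exists_prop, Nat.lt_succ_iff_lt_or_eq]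
      grind
    calc ∑ i ∈ Finset.range (N + 1), eVariationOn f (s i)
        ≤ eVariationOn f (s N) + eVariationOn f (⋃ i < N, s i) := by
          rw [Finset.sum_range_succ, add_comm]; gcongr
      _ ≤ eVariationOn f (⋃ i < N + 1, s i) := by
          rw [hunion]; exact eVariationOn.add_le_union f hleft

noncomputable def branchInv (n : ℕ) (t : ℝ) : ℝ := 1 / (t + n)

/-- `fullCylinder α n` is the cylinder of `𝒫_1` on which `T_α x = 1/x - n`. -/
def fullCylinder (α : ℝ) (n : ℕ) : Set ℝ := branchInv n '' Ioo (α - 1) α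

theorem T_branchInv {α t : ℝ} {n : ℕ} (ht : t ∈ Ico (α - 1) α) (hn : 0 < t + n) :
    T α (branchInv n t) = t := by
  have hfloor : ⌊t + n + 1 - α⌋ = n := by
    rw [show t + n + 1 - α = (t + 1 - α) + n by ring, Int.floor_add_natCast,
      Int.floor_eq_zero_iff.mpr ⟨by linarith [ht.1], by linarith [ht.2]⟩, zero_add]
  rw [T, branchInv, if_neg (by positivity), abs_of_pos (by positivity), one_div_one_div,
    hfloor]
  push_cast
  ring

theorem antitoneOn_branchInv (n : ℕ) : AntitoneOn (branchInv n) (Ioi (-n)) := by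
  intro x hx y hy hxy
  simp only [mem_Ioi] at hx hy
  exact one_div_le_one_div_of_le (by linarith) (by linarith)

theorem fullCylinder_subset_Icc {α : ℝ} (hα : α ∈ Ioc 0 1) {n : ℕ}
    (hn : 1 / α + 1 ≤ n) : fullCylinder α n ⊆ Icc (α - 1) α := by
  rintro _ ⟨t, ht, rfl⟩
  have hα' : 0 < 1 / α := one_div_pos.mpr hα.1
  have hpos : 1 / α < t + n := by linarith [ht.1, hα.1]
  have hx_pos : 0 < branchInv n t := one_div_pos.mpr (hα'.trans hpos)
  refine ⟨by linarith [hα.2], ?_⟩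
  calc branchInv n t = 1 / (t + n) := rfl
    _ ≤ 1 / (1 / α) := one_div_le_one_div_of_le hα' hpos.le
    _ = α := one_div_one_div α

theorem le_of_mem_fullCylinder {α x y : ℝ} {m n : ℕ} (hm : 1 - α ≤ m) (hmn : m < n)
    (hx : x ∈ fullCylinder α n) (hy : y ∈ fullCylinder α m) : x ≤ y := by
  obtain ⟨t, ht, rfl⟩ := hx
  obtain ⟨s, hs, rfl⟩ := hy
  have hmn' : (m : ℝ) + 1 ≤ n := by exact_mod_cast hmn
  exact one_div_le_one_div_of_le (by linarith [hs.1]) (by linarith [ht.1, hs.2])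

theorem eVariationOn_comp_T_fullCylinder {α : ℝ} {n : ℕ} (hn : 1 - α ≤ n)
    (u : ℝ → ℝ) :
    eVariationOn (u ∘ T α) (fullCylinder α n) = eVariationOn u (Ioo (α - 1) α) := by
  have hdom : Ioo (α - 1) α ⊆ Ioi (-n : ℝ) := fun t ht => by
    simp only [mem_Ioi]; linarith [ht.1]
  rw [fullCylinder, ← eVariationOn.comp_eq_of_antitoneOn _ _
    ((antitoneOn_branchInv n).mono hdom)]
  refine eVariationOn.eq_of_eqOn fun t ht => ?_
  simp only [Function.comp_apply]
  rw [T_branchInv (Ioo_subset_Ico_self ht) (by linarith [ht.1])]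

/-- if `u ∘ T_α` has bounded variation on `I_α = [α-1, α]`, then `u` is
constant almost everywhere on `I_α` (since there are infinitely many full cylinders, each
of which contributes `var_{(α-1,α)} u` to the variation of `u ∘ T_α`). -/
theorem const_of_comp_BV (α : ℝ) (hα : α ∈ Ioo (0:ℝ) 1) (u : ℝ → ℝ)
    (h : BoundedVariationOn (u ∘ T α) (Icc (α - 1) α)) :
    ∃ c : ℝ, ∀ᵐ x ∂(volume.restrict (Icc (α - 1) α)), u x = c := by
  obtain ⟨n₀, hn₀⟩ := exists_nat_ge (1 / α + 1)
  have hn₀α : 1 - α ≤ n₀ := by linarith [one_div_pos.mpr hα.1, hα.1]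
  have hsum : ∑' _ : ℕ, eVariationOn u (Ioo (α - 1) α) ≤
      eVariationOn (u ∘ T α) (Icc (α - 1) α) := by
    have := eVariationOn.tsum_le_of_antitone_family (u ∘ T α)
      (s := fun i => fullCylinder α (n₀ + i))
      (fun i => fullCylinder_subset_Icc (Ioo_subset_Ioc_self hα) (by push_cast; linarith))
      (fun i j hij x hx y hy => le_of_mem_fullCylinder (by push_cast; linarith) (by omega) hx hy)
    refine le_of_eq_of_le (tsum_congr fun i => ?_) this
    rw [eVariationOn_comp_T_fullCylinder (by push_cast; linarith)]
  have hzero : eVariationOn u (Ioo (α - 1) α) = 0 := by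
    by_contra hne
    exact h (top_le_iff.mp ((ENNReal.tsum_const_eq_top_of_ne_zero (α := ℕ) hne) ▸ hsum))
  have hmid : α / 2 ∈ Ioo (α - 1) α := ⟨by linarith [hα.2], by linarith [hα.1]⟩
  refine ⟨u (α / 2), ?_⟩
  rw [← Measure.restrict_congr_set Ioo_ae_eq_Icc]
  exact ae_restrict_of_forall_mem measurableSet_Ioo fun x hx =>
    edist_eq_zero.mp ((eVariationOn.eq_zero_iff u).mp hzero x hx _ hmid)
end

section
/- For α ∈ (0,1), n ≥ 1, f : I_α → ℝ of class C¹ with ‖f‖_{C¹} ≤ 1, and θ ∈ ℂ: on the interior of each cylinder I_j ∈ 𝒫_n, the derivative of e^{θ S_n f}/(T_α^n)' satisfies |(e^{θ S_n f}/(T_α^n)')'(x)| ≤ e^{n|θ|·‖f‖_∞} · (|θ|·‖f'‖_∞ + 2)/(1 − γ_α), where γ_α = max{α², (α−1)²}. -/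
/-
On a right neighbourhood of `x`, `T_α^n` coincides with a composition of Möbius branches
`y ↦ ε / y - a` (`ε = ±1`) whose intermediate points stay in `[α - 1, α] \ {0}`. This is built one
iterate at a time: the right limit `w` of `T_α^j` at `x` cannot be `0`, for otherwise `T_α^{j+1}`
would take every value of `[α - 1, α)` arbitrarily close to `x`, and continuity of `T_α^n` at `x`
would make `T_α^n` constant; and if `w ≠ 0`, `T_α` is a single branch on the side from which
`T_α^j` approaches `w`, since `T_α^j` is strictly monotone there. Only a right neighbourhood is
controlled because `x` may be an endpoint of a cylinder at which `T_α^n` is still differentiable.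

On such a composition the weight `e^{θ S_n f} / (T_α^n)'` is the product of the factors
`e^{θ f(y_k)} (-ε_k y_k²)`. Differentiating one branch at a time, with `y_k² ≤ γ_α` and
`|(T_α^k)'| ≥ γ_α^{-k}`, gives `e^{n |θ| ‖f‖_∞} (|θ| ‖f'‖_∞ + 2) ∑_{k < n} γ_α^k`.
-/

open Set

open Filter Topology

lemma eventually_nhdsGE_of_nhdsGT {X : Type*} [TopologicalSpace X] [PartialOrder X] {p : X → Prop}
    {x : X} (hx : p x) (h : ∀ᶠ t in 𝓝[>] x, p t) : ∀ᶠ t in 𝓝[≥] x, p t := by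
  rw [eventually_nhdsWithin_iff] at h ⊢
  filter_upwards [h] with t ht htx
  rcases (mem_Ici.1 htx).eq_or_lt with rfl | hlt
  exacts [hx, ht hlt]

lemma eventually_eventually_nhds_of_nhdsGT {p : ℝ → Prop} {x : ℝ} (h : ∀ᶠ t in 𝓝[>] x, p t) :
    ∀ᶠ t in 𝓝[>] x, ∀ᶠ s in 𝓝 t, p s := by
  filter_upwards [eventually_eventually_nhdsWithin.2 h, self_mem_nhdsWithin] with t ht htx
  rwa [nhdsWithin_eq_nhds.2 (Ioi_mem_nhds htx)] at ht

lemma eventually_lt_or_eventually_gt_of_hasDerivAt {g g' : ℝ → ℝ} {x : ℝ}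
    (h : ∀ᶠ t in 𝓝[≥] x, HasDerivAt g (g' t) t ∧ g' t ≠ 0) :
    (∀ᶠ t in 𝓝[>] x, g x < g t) ∨ ∀ᶠ t in 𝓝[>] x, g t < g x := by
  obtain ⟨u, hxu, hu⟩ := mem_nhdsGE_iff_exists_Ico_subset.1 h
  have hcont : ContinuousOn g (Ico x u) := fun t ht => (hu ht).1.continuousAt.continuousWithinAt
  have hder : ∀ t ∈ interior (Ico x u), HasDerivWithinAt g (g' t) (interior (Ico x u)) t :=
    fun t ht => (hu (interior_subset ht)).1.hasDerivWithinAt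
  have hx : x ∈ Ico x u := ⟨le_rfl, hxu⟩
  have hIoo : Ioo x u ∈ 𝓝[>] x := Ioo_mem_nhdsGT hxu
  rcases hasDerivWithinAt_forall_lt_or_forall_gt_of_forall_ne (convex_Ico x u)
    (fun t ht => (hu ht).1.hasDerivWithinAt) (fun t ht => (hu ht).2) with hneg | hpos
  · have hanti := strictAntiOn_of_hasDerivWithinAt_neg (convex_Ico x u) hcont hder
      fun t ht => hneg t (interior_subset ht)
    exact Or.inr (mem_of_superset hIoo fun t ht => hanti hx (Ioo_subset_Ico_self ht) ht.1)
  · have hmono := strictMonoOn_of_hasDerivWithinAt_pos (convex_Ico x u) hcont hder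
      fun t ht => hpos t (interior_subset ht)
    exact Or.inl (mem_of_superset hIoo fun t ht => hmono hx (Ioo_subset_Ico_self ht) ht.1)

lemma deriv_eq_of_eventuallyEq_nhdsGT {E : Type*} [NormedAddCommGroup E] [NormedSpace ℝ E]
    {φ ψ : ℝ → E} {x : ℝ} {v : E} (hφ : DifferentiableAt ℝ φ x) (hψ : HasDerivAt ψ v x)
    (h : φ =ᶠ[𝓝[>] x] ψ) : deriv φ x = v := by
  have hx : φ x = ψ x := tendsto_nhds_unique (hφ.continuousAt.tendsto.mono_left nhdsWithin_le_nhds)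
    ((hψ.continuousAt.tendsto.mono_left nhdsWithin_le_nhds).congr' h.symm)
  exact (uniqueDiffWithinAt_Ioi x).eq_deriv _ hφ.hasDerivAt.hasDerivWithinAt
    (hψ.hasDerivWithinAt.congr_of_eventuallyEq h hx)

lemma norm_deriv_le_of_eventuallyEq_nhdsGT {E : Type*} [NormedAddCommGroup E] [NormedSpace ℝ E]
    {φ ψ : ℝ → E} {x : ℝ} {v : E} {C : ℝ} (hψ : HasDerivAt ψ v x) (h : φ =ᶠ[𝓝[>] x] ψ)
    (hv : ‖v‖ ≤ C) : ‖deriv φ x‖ ≤ C := by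
  by_cases hφ : DifferentiableAt ℝ φ x
  · rwa [deriv_eq_of_eventuallyEq_nhdsGT hφ hψ h]
  · rw [deriv_zero_of_not_differentiableAt hφ, norm_zero]
    exact (norm_nonneg v).trans hv

lemma norm_cexp_mul_ofReal_le (θ : ℂ) {r C : ℝ} (h : |r| ≤ C) :
    ‖Complex.exp (θ * r)‖ ≤ Real.exp (‖θ‖ * C) := by
  rw [Complex.norm_exp, Real.exp_le_exp, Complex.re_mul_ofReal]
  calc θ.re * r ≤ |θ.re| * |r| := (le_abs_self _).trans (abs_mul _ _).le
    _ ≤ ‖θ‖ * C := mul_le_mul (Complex.abs_re_le_norm θ) h (abs_nonneg _) (norm_nonneg _)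

namespace AlphaCF

/-- A digit `d = (ε, a)` with `|ε| = 1` acts by the branch `y ↦ ε / y - a`; on the cylinder with
digits `L`, `T_α^k` is `branchComp (L.take k)`. -/
noncomputable def branch (d : ℝ × ℤ) (y : ℝ) : ℝ := d.1 / y - d.2

noncomputable def branchComp : List (ℝ × ℤ) → ℝ → ℝ
  | [], y => y
  | d :: L, y => branchComp L (branch d y)

noncomputable def branchDeriv : List (ℝ × ℤ) → ℝ → ℝ
  | [], _ => 1
  | d :: L, y => -d.1 / y ^ 2 * branchDeriv L (branch d y)

noncomputable def birkhoffSum (f : ℝ → ℝ) : List (ℝ × ℤ) → ℝ → ℝ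
  | [], _ => 0
  | d :: L, y => f y + birkhoffSum f L (branch d y)

def Admissible (α : ℝ) : List (ℝ × ℤ) → ℝ → Prop
  | [], _ => True
  | d :: L, y => |d.1| = 1 ∧ y ∈ Icc (α - 1) α ∧ y ≠ 0 ∧ Admissible α L (branch d y)

noncomputable def weight (θ : ℂ) (f : ℝ → ℝ) (L : List (ℝ × ℤ)) (y : ℝ) : ℂ :=
  Complex.exp (θ * birkhoffSum f L y) / branchDeriv L y

/-- `e^{θ f(y)} / (branch d)'(y)` for `d.1 = ε = ±1`. -/
noncomputable def localFactor (θ : ℂ) (f : ℝ → ℝ) (ε t : ℝ) : ℂ :=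
  Complex.exp (θ * f t) * ((-ε * t ^ 2 : ℝ) : ℂ)

def γ (α : ℝ) : ℝ := max (α ^ 2) ((α - 1) ^ 2)

lemma sq_le_γ {α y : ℝ} (hy : y ∈ Icc (α - 1) α) : y ^ 2 ≤ γ α := by
  rcases le_or_gt 0 y with h | h
  · exact le_max_of_le_left (by nlinarith [hy.2])
  · exact le_max_of_le_right (by nlinarith [hy.1])

section Gamma

variable {α : ℝ} (hα : α ∈ Ioo (0 : ℝ) 1)
include hα

lemma γ_pos : 0 < γ α := lt_max_of_lt_left (by nlinarith [hα.1])

lemma γ_lt_one : γ α < 1 := max_lt (by nlinarith [hα.1, hα.2]) (by nlinarith [hα.1, hα.2])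

lemma geom_sum_γ_le (n : ℕ) : ∑ j ∈ Finset.range n, γ α ^ j ≤ 1 / (1 - γ α) := by
  simpa using geom_sum_Ico_le_of_lt_one (m := 0) (n := n) (γ_pos hα).le (γ_lt_one hα)

end Gamma

lemma T_neg (α y : ℝ) : T α (-y) = T α y := by
  simp [T]

lemma T_abs (α y : ℝ) : T α |y| = T α y := by
  simp [T]

lemma T_of_pos (α : ℝ) {y : ℝ} (hy : 0 < y) : T α y = 1 / y - ⌊1 / y + 1 - α⌋ := by
  simp [T, hy.ne', abs_of_pos hy]

lemma T_mem_Ico {α : ℝ} (hα : α ∈ Ioo (0 : ℝ) 1) (y : ℝ) : T α y ∈ Ico (α - 1) α := by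
  by_cases hy : y = 0
  · simp only [T, hy, if_true]
    exact ⟨by linarith [hα.2], hα.1⟩
  · have : T α y = Int.fract (1 / |y| + 1 - α) + α - 1 := by
      simp only [T, hy, if_false, Int.fract]
      ring
    rw [this]
    constructor <;>
      linarith [Int.fract_nonneg (1 / |y| + 1 - α), Int.fract_lt_one (1 / |y| + 1 - α)]

lemma iterate_T_mem_Icc {α : ℝ} (hα : α ∈ Ioo (0 : ℝ) 1) {y : ℝ} (hy : y ∈ Icc (α - 1) α)
    (k : ℕ) : (T α)^[k] y ∈ Icc (α - 1) α :=
  MapsTo.iterate (fun z _ => Ico_subset_Icc_self (T_mem_Ico hα z)) k hy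

lemma iterate_T_eq_iterate_T_iterate (α : ℝ) {j n : ℕ} (hjn : j < n) (y : ℝ) :
    (T α)^[n] y = (T α)^[n - j - 1] (T α ((T α)^[j] y)) := by
  rw [← Function.iterate_succ_apply' (T α), ← Function.iterate_add_apply]
  congr 1
  omega

lemma T_one_div_nat_add {α β : ℝ} (hα : 0 < α) (hβ : β ∈ Ico (α - 1) α) {m : ℕ} (hm : 1 ≤ m) :
    T α (1 / (m + β)) = β := by
  have hm' : (1 : ℝ) ≤ m := by exact_mod_cast hm
  have hpos : 0 < (m : ℝ) + β := by linarith [hβ.1]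
  have hfloor : ⌊(m : ℝ) + β + 1 - α⌋ = m := by
    rw [Int.floor_eq_iff]
    push_cast
    constructor <;> linarith [hβ.1, hβ.2]
  rw [T_of_pos α (by positivity), one_div_one_div, hfloor]
  push_cast
  ring

lemma exists_eventually_T_eq_of_pos (α : ℝ) {w : ℝ} (hw : 0 < w) {l : Filter ℝ}
    (hl : l = 𝓝[>] w ∨ l = 𝓝[<] w) : ∃ m : ℤ, ∀ᶠ y in l, T α y = 1 / y - m := by
  have hle : l ≤ 𝓝 w := by rcases hl with rfl | rfl <;> exact nhdsWithin_le_nhds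
  have hcont : Tendsto (fun y => 1 / y + 1 - α) l (𝓝 (1 / w + 1 - α)) :=
    (((continuousAt_const.div continuousAt_id hw.ne').add continuousAt_const).sub
      continuousAt_const).tendsto.mono_left hle
  obtain ⟨m, hm⟩ : ∃ m : ℤ, ∀ᶠ y in l, ⌊1 / y + 1 - α⌋ = m := by
    rcases hl with rfl | rfl
    · refine ⟨_, tendsto_pure.1 ((tendsto_floor_left_pure_ceil_sub_one _).comp
        (tendsto_nhdsWithin_iff.2 ⟨hcont, ?_⟩))⟩
      filter_upwards [self_mem_nhdsWithin] with y hy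
      have : 1 / y < 1 / w := one_div_lt_one_div_of_lt hw hy
      simp only [mem_Iio]; linarith
    · refine ⟨_, tendsto_pure.1 ((tendsto_floor_right_pure_floor _).comp
        (tendsto_nhdsWithin_iff.2 ⟨hcont, ?_⟩))⟩
      filter_upwards [self_mem_nhdsWithin, hle (eventually_gt_nhds hw)] with y hy hy0
      have : 1 / w < 1 / y := one_div_lt_one_div_of_lt hy0 hy
      simp only [mem_Ici]; linarith
  exact ⟨m, (hm.and (hle (eventually_gt_nhds hw))).mono fun y ⟨hy, hy0⟩ => by
    rw [T_of_pos α hy0, hy]⟩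

lemma exists_eventually_T_eq_branch (α : ℝ) {w : ℝ} (hw : w ≠ 0) {l : Filter ℝ}
    (hl : l = 𝓝[>] w ∨ l = 𝓝[<] w) :
    ∃ d : ℝ × ℤ, |d.1| = 1 ∧ ∀ᶠ y in l, T α y = branch d y := by
  rcases hw.lt_or_gt with hneg | hpos
  · obtain ⟨l', hl', hneg_l⟩ : ∃ l', (l' = 𝓝[>] (-w) ∨ l' = 𝓝[<] (-w)) ∧ Tendsto Neg.neg l l' := by
      rcases hl with rfl | rfl
      exacts [⟨_, Or.inr rfl, tendsto_neg_nhdsGT⟩, ⟨_, Or.inl rfl, tendsto_neg_nhdsLT⟩]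
    obtain ⟨m, hm⟩ := exists_eventually_T_eq_of_pos α (neg_pos.2 hneg) hl'
    refine ⟨(-1, m), by simp, (hneg_l.eventually hm).mono fun y hy => ?_⟩
    rw [← T_neg, hy, branch]
    ring
  · obtain ⟨m, hm⟩ := exists_eventually_T_eq_of_pos α hpos hl
    exact ⟨(1, m), by simp, hm⟩

lemma hasDerivAt_branch (d : ℝ × ℤ) {y : ℝ} (hy : y ≠ 0) :
    HasDerivAt (branch d) (-d.1 / y ^ 2) y := by
  have h := ((hasDerivAt_inv hy).const_mul d.1).sub_const (d.2 : ℝ)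
  rw [show d.1 * -(y ^ 2)⁻¹ = -d.1 / y ^ 2 by ring] at h
  exact h

lemma branchComp_append_singleton (L : List (ℝ × ℤ)) (d : ℝ × ℤ) (y : ℝ) :
    branchComp (L ++ [d]) y = branch d (branchComp L y) := by
  induction L generalizing y with
  | nil => rfl
  | cons e L ih => exact ih _

lemma admissible_append_singleton {α : ℝ} {L : List (ℝ × ℤ)} {d : ℝ × ℤ} {y : ℝ}
    (hL : Admissible α L y) (hd : |d.1| = 1) (hI : branchComp L y ∈ Icc (α - 1) α)
    (h0 : branchComp L y ≠ 0) : Admissible α (L ++ [d]) y := by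
  induction L generalizing y with
  | nil => exact ⟨hd, hI, h0, trivial⟩
  | cons e L ih => exact ⟨hL.1, hL.2.1, hL.2.2.1, ih hL.2.2.2 hI h0⟩

lemma birkhoffSum_eq_sum (f : ℝ → ℝ) (L : List (ℝ × ℤ)) (y : ℝ) :
    birkhoffSum f L y = ∑ k ∈ Finset.range L.length, f (branchComp (L.take k) y) := by
  induction L generalizing y with
  | nil => simp [birkhoffSum]
  | cons d L ih =>
    rw [List.length_cons, Finset.sum_range_succ', birkhoffSum, ih, add_comm]
    rfl

lemma hasDerivAt_branchComp {α : ℝ} {L : List (ℝ × ℤ)} {y : ℝ} (h : Admissible α L y) :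
    HasDerivAt (branchComp L) (branchDeriv L y) y := by
  induction L generalizing y with
  | nil => exact hasDerivAt_id y
  | cons d L ih =>
    rw [branchDeriv, mul_comm]
    exact (ih h.2.2.2).comp y (hasDerivAt_branch d h.2.2.1)

lemma one_le_γ_pow_mul_abs_branchDeriv {α : ℝ} {L : List (ℝ × ℤ)}
    {y : ℝ} (h : Admissible α L y) : 1 ≤ γ α ^ L.length * |branchDeriv L y| := by
  induction L generalizing y with
  | nil => simp [branchDeriv]
  | cons d L ih =>
    obtain ⟨hd, hy, hy0, hL⟩ := h
    have hy2 : 0 < y ^ 2 := by positivity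
    have hexp : 1 ≤ γ α / y ^ 2 := (one_le_div hy2).2 (sq_le_γ hy)
    calc (1 : ℝ) ≤ (γ α ^ L.length * |branchDeriv L (branch d y)|) * (γ α / y ^ 2) :=
          one_le_mul_of_one_le_of_one_le (ih hL) hexp
      _ = γ α ^ (d :: L).length * |branchDeriv (d :: L) y| := by
          rw [branchDeriv, abs_mul, abs_div, abs_neg, hd, abs_of_pos hy2, List.length_cons,
            pow_succ]
          ring

lemma branchDeriv_ne_zero {α : ℝ} {L : List (ℝ × ℤ)} {y : ℝ} (h : Admissible α L y) :
    branchDeriv L y ≠ 0 := fun h0 => by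
  have := one_le_γ_pow_mul_abs_branchDeriv h
  norm_num [h0] at this

lemma abs_birkhoffSum_le {α Bf : ℝ} {f : ℝ → ℝ} (hBf : ∀ x ∈ Icc (α - 1) α, |f x| ≤ Bf)
    {L : List (ℝ × ℤ)} {y : ℝ} (h : Admissible α L y) :
    |birkhoffSum f L y| ≤ L.length * Bf := by
  induction L generalizing y with
  | nil => simp [birkhoffSum]
  | cons d L ih =>
    rw [birkhoffSum, List.length_cons, Nat.cast_succ, add_mul, one_mul, add_comm _ Bf]
    exact (abs_add_le _ _).trans (add_le_add (hBf y h.2.1) (ih h.2.2.2))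

lemma norm_weight_le {α Bf : ℝ} {f : ℝ → ℝ} (hBf : ∀ x ∈ Icc (α - 1) α, |f x| ≤ Bf) (θ : ℂ)
    {L : List (ℝ × ℤ)} {y : ℝ} (h : Admissible α L y) :
    ‖weight θ f L y‖ ≤ Real.exp (L.length * ‖θ‖ * Bf) * γ α ^ L.length := by
  have hD := one_le_γ_pow_mul_abs_branchDeriv h
  have hD0 : 0 < |branchDeriv L y| := abs_pos.2 (branchDeriv_ne_zero h)
  have hexp := norm_cexp_mul_ofReal_le θ (abs_birkhoffSum_le hBf h)
  calc ‖weight θ f L y‖ = ‖Complex.exp (θ * birkhoffSum f L y)‖ / |branchDeriv L y| := by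
        rw [weight, norm_div, Complex.norm_real, Real.norm_eq_abs]
    _ ≤ Real.exp (L.length * ‖θ‖ * Bf) / |branchDeriv L y| := by
        rw [mul_left_comm, ← mul_assoc] at hexp
        exact div_le_div_of_nonneg_right hexp hD0.le
    _ ≤ Real.exp (L.length * ‖θ‖ * Bf) * γ α ^ L.length := by
        rw [div_le_iff₀ hD0, mul_assoc (Real.exp _)]
        exact le_mul_of_one_le_right (Real.exp_nonneg _) hD

lemma weight_cons (θ : ℂ) (f : ℝ → ℝ) {d : ℝ × ℤ} (hd : |d.1| = 1) (L : List (ℝ × ℤ)) {y : ℝ}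
    (hy : y ≠ 0) : weight θ f (d :: L) y = localFactor θ f d.1 y * weight θ f L (branch d y) := by
  have hd2 : (d.1 : ℂ) ^ 2 = 1 := by
    rw [← Complex.ofReal_pow, ← sq_abs, hd]; simp
  simp only [weight, localFactor, birkhoffSum, branchDeriv]
  rcases eq_or_ne (branchDeriv L (branch d y)) 0 with h0 | h0
  · simp [h0]
  · have hd0 : (d.1 : ℂ) ≠ 0 := by rintro h; simp [h] at hd2
    have hy0 : (y : ℂ) ≠ 0 := Complex.ofReal_ne_zero.2 hy
    have h0' : (branchDeriv L (branch d y) : ℂ) ≠ 0 := Complex.ofReal_ne_zero.2 h0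
    push_cast
    rw [mul_add, Complex.exp_add]
    field_simp
    rw [hd2]

lemma norm_localFactor_le (θ : ℂ) {f : ℝ → ℝ} {ε y Bf : ℝ} (hε : |ε| = 1) (hf : |f y| ≤ Bf) :
    ‖localFactor θ f ε y‖ ≤ Real.exp (‖θ‖ * Bf) * y ^ 2 := by
  rw [localFactor, norm_mul, Complex.norm_real, Real.norm_eq_abs, abs_mul, abs_neg, hε, one_mul,
    abs_of_nonneg (sq_nonneg y)]
  exact mul_le_mul_of_nonneg_right (norm_cexp_mul_ofReal_le θ hf) (sq_nonneg y)

lemma exists_hasDerivAt_localFactor (θ : ℂ) {f f' : ℝ → ℝ} {ε y Bf Bf' : ℝ}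
    (hf : HasDerivAt f (f' y) y) (hε : |ε| = 1) (hy : |y| ≤ 1) (hBf : |f y| ≤ Bf)
    (hBf' : |f' y| ≤ Bf') :
    ∃ u, HasDerivAt (localFactor θ f ε) u y ∧ ‖u‖ ≤ Real.exp (‖θ‖ * Bf) * (‖θ‖ * Bf' + 2) := by
  have hE := norm_cexp_mul_ofReal_le θ hBf
  have hBf'0 : 0 ≤ Bf' := (abs_nonneg _).trans hBf'
  refine ⟨_, (((hf.ofReal_comp).const_mul θ).cexp).mul
    (((hasDerivAt_pow 2 y).const_mul (-ε)).ofReal_comp), ?_⟩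
  have hy2 : y ^ 2 ≤ 1 := by rw [← sq_abs]; exact pow_le_one₀ (abs_nonneg y) hy
  calc _ ≤ ‖Complex.exp (θ * f y)‖ * (‖θ‖ * |f' y|) * y ^ 2
          + ‖Complex.exp (θ * f y)‖ * (2 * |y|) := by
        refine (norm_add_le _ _).trans (le_of_eq ?_)
        simp only [norm_mul, Complex.norm_real, Real.norm_eq_abs, abs_neg, hε, one_mul,
          abs_pow, sq_abs, Nat.cast_ofNat, abs_two]
        norm_num
    _ ≤ Real.exp (‖θ‖ * Bf) * (‖θ‖ * Bf') * 1 + Real.exp (‖θ‖ * Bf) * (2 * 1) := by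
        gcongr
    _ = Real.exp (‖θ‖ * Bf) * (‖θ‖ * Bf' + 2) := by ring

theorem exists_hasDerivAt_weight {α Bf Bf' : ℝ} (hα : α ∈ Ioo (0 : ℝ) 1) {f f' : ℝ → ℝ}
    (hf : ∀ x ∈ Icc (α - 1) α, HasDerivAt f (f' x) x)
    (hBf : ∀ x ∈ Icc (α - 1) α, |f x| ≤ Bf) (hBf' : ∀ x ∈ Icc (α - 1) α, |f' x| ≤ Bf')
    (θ : ℂ) {L : List (ℝ × ℤ)} {y : ℝ} (h : Admissible α L y) :
    ∃ v, HasDerivAt (weight θ f L) v y ∧ ‖v‖ ≤ Real.exp (L.length * ‖θ‖ * Bf) *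
      ((‖θ‖ * Bf' + 2) * ∑ j ∈ Finset.range L.length, γ α ^ j) := by
  induction L generalizing y with
  | nil => exact ⟨0, hasDerivAt_const y (Complex.exp (θ * (0 : ℝ)) / (1 : ℝ)), by simp⟩
  | cons d L ih =>
    obtain ⟨hd, hyI, hy0, hL⟩ := h
    obtain ⟨v, hv, hvb⟩ := ih hL
    have hy1 : |y| ≤ 1 := abs_le.2 ⟨by linarith [hyI.1, hα.1], by linarith [hyI.2, hα.2]⟩
    obtain ⟨u, hu, hub⟩ :=
      exists_hasDerivAt_localFactor θ (hf y hyI) hd hy1 (hBf y hyI) (hBf' y hyI)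
    have hcons : weight θ f (d :: L) =ᶠ[𝓝 y]
        fun t => localFactor θ f d.1 t * weight θ f L (branch d t) :=
      (eventually_ne_nhds hy0).mono fun t ht => weight_cons θ f hd L ht
    refine ⟨_, (hu.mul (hv.scomp y (hasDerivAt_branch d hy0))).congr_of_eventuallyEq hcons, ?_⟩
    have hy2 : 0 < y ^ 2 := by positivity
    have hbr : ‖-d.1 / y ^ 2‖ = 1 / y ^ 2 := by
      rw [Real.norm_eq_abs, abs_div, abs_neg, hd, abs_of_pos hy2]
    have hexp : Real.exp (((d :: L).length : ℝ) * ‖θ‖ * Bf)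
        = Real.exp (‖θ‖ * Bf) * Real.exp (L.length * ‖θ‖ * Bf) := by
      rw [← Real.exp_add, List.length_cons]; push_cast; ring_nf
    calc _ ≤ ‖u‖ * ‖weight θ f L (branch d y)‖
          + ‖localFactor θ f d.1 y‖ * (‖-d.1 / y ^ 2‖ * ‖v‖) := by
          rw [← norm_mul, ← norm_smul, ← norm_mul]; exact norm_add_le _ _
      _ ≤ (Real.exp (‖θ‖ * Bf) * (‖θ‖ * Bf' + 2))
            * (Real.exp (L.length * ‖θ‖ * Bf) * γ α ^ L.length)
          + (Real.exp (‖θ‖ * Bf) * y ^ 2) * (1 / y ^ 2 * (Real.exp (L.length * ‖θ‖ * Bf) *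
            ((‖θ‖ * Bf' + 2) * ∑ j ∈ Finset.range L.length, γ α ^ j))) := by
          rw [hbr]
          gcongr
          · exact (norm_nonneg u).trans hub
          · exact norm_weight_le hBf θ hL
          · exact norm_localFactor_le θ hd (hBf y hyI)
      _ = _ := by
          rw [hexp, List.length_cons, Finset.sum_range_succ]
          field_simp
          ring

lemma frequently_T_comp_eq {α β : ℝ} (hα : 0 < α) (hβ : β ∈ Ico (α - 1) α) {B : ℝ → ℝ} {x : ℝ}
    (hB : ∀ᶠ t in 𝓝[≥] x, ContinuousAt B t) (hB0 : B x = 0)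
    (hne : ∀ᶠ t in 𝓝[>] x, B t ≠ 0) : ∃ᶠ t in 𝓝[>] x, T α (B t) = β := by
  rw [Filter.frequently_iff]
  intro S hS
  obtain ⟨u, hxu, hu⟩ := mem_nhdsGE_iff_exists_Ico_subset.1 hB
  obtain ⟨u', hxu', hu'⟩ := mem_nhdsGT_iff_exists_Ioo_subset.1 (inter_mem hS hne)
  obtain ⟨t₁, hxt₁, ht₁⟩ := exists_between (lt_min (mem_Ioi.1 hxu) (mem_Ioi.1 hxu'))
  have hB₁ : 0 < |B t₁| := abs_pos.2 (hu' ⟨hxt₁, ht₁.trans_le (min_le_right _ _)⟩).2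
  obtain ⟨m, hm⟩ := exists_nat_gt (1 / |B t₁| + 1)
  have hm1 : 1 ≤ m := by
    have : (1 : ℝ) < m := by linarith [one_div_pos.2 hB₁]
    exact_mod_cast this.le
  have hsmall : 1 / (m + β) ∈ Ioo |B x| |B t₁| := by
    rw [hB0, abs_zero]
    have hpos : 1 / |B t₁| < m + β := by linarith [hβ.1]
    exact ⟨one_div_pos.2 ((one_div_pos.2 hB₁).trans hpos),
      (one_div_lt (by linarith [one_div_pos.2 hB₁]) hB₁).2 hpos⟩
  have hcont : ContinuousOn (fun t => |B t|) (Icc x t₁) := fun t ht =>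
    (hu ⟨ht.1, ht.2.trans_lt (ht₁.trans_le (min_le_left _ _))⟩).abs.continuousWithinAt
  obtain ⟨t₀, ht₀, hBt₀⟩ := intermediate_value_Ioo hxt₁.le hcont hsmall
  refine ⟨t₀, (hu' ⟨ht₀.1, ht₀.2.trans (ht₁.trans_le (min_le_right _ _))⟩).1, ?_⟩
  rw [← T_abs, show |B t₀| = 1 / (m + β) from hBt₀, T_one_div_nat_add hα hβ hm1]

lemma iterate_T_eq_const_of_eq_zero {α : ℝ} (hα : α ∈ Ioo (0 : ℝ) 1) {j n : ℕ}
    (hjn : j < n) {B : ℝ → ℝ} {x : ℝ} (hTj : ∀ᶠ t in 𝓝[>] x, (T α)^[j] t = B t)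
    (hB : ∀ᶠ t in 𝓝[≥] x, ContinuousAt B t) (hB0 : B x = 0) (hne : ∀ᶠ t in 𝓝[>] x, B t ≠ 0)
    (hcont : ContinuousAt (T α)^[n] x) (y : ℝ) : (T α)^[n] y = (T α)^[n] x := by
  have hβ : ∀ β ∈ Ico (α - 1) α, (T α)^[n - j - 1] β = (T α)^[n] x := fun β hβ =>
    tendsto_nhds_unique_of_frequently_eq tendsto_const_nhds
      (hcont.tendsto.mono_left nhdsWithin_le_nhds)
      (((frequently_T_comp_eq hα.1 hβ hB hB0 hne).and_eventually hTj).mono fun t ⟨ht, hj⟩ => by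
        rw [iterate_T_eq_iterate_T_iterate α hjn, hj, ht])
  rw [iterate_T_eq_iterate_T_iterate α hjn]
  exact hβ _ (T_mem_Ico hα _)

section Cylinder

variable {α x : ℝ} (hα : α ∈ Ioo (0 : ℝ) 1) {n : ℕ} (hd : deriv (T α)^[n] x ≠ 0)
include hα hd

lemma ne_zero_of_eventually_iterate_T_eq {j : ℕ} (hjn : j < n) {B B' : ℝ → ℝ}
    (hB : ∀ᶠ t in 𝓝[≥] x, HasDerivAt B (B' t) t ∧ B' t ≠ 0)
    (hTj : ∀ᶠ t in 𝓝[>] x, (T α)^[j] t = B t) : B x ≠ 0 := by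
  intro hB0
  have hne : ∀ᶠ t in 𝓝[>] x, B t ≠ 0 := by
    rcases eventually_lt_or_eventually_gt_of_hasDerivAt hB with h | h
    · exact h.mono fun t ht => (hB0 ▸ ht).ne'
    · exact h.mono fun t ht => (hB0 ▸ ht).ne
  have hconst := iterate_T_eq_const_of_eq_zero hα hjn hTj (hB.mono fun t ht => ht.1.continuousAt)
    hB0 hne (differentiableAt_of_deriv_ne_zero hd).continuousAt
  apply hd
  rw [show (T α)^[n] = fun _ => (T α)^[n] x from funext hconst]
  exact deriv_const x _

lemma exists_eventually_T_comp_eq_branch (hx : Icc (α - 1) α ∈ 𝓝 x) {j : ℕ} (hjn : j < n)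
    {B B' : ℝ → ℝ}
    (hB : ∀ᶠ t in 𝓝[≥] x, HasDerivAt B (B' t) t ∧ B' t ≠ 0)
    (hTj : ∀ᶠ t in 𝓝[>] x, (T α)^[j] t = B t) :
    (∀ᶠ t in 𝓝[≥] x, B t ∈ Icc (α - 1) α ∧ B t ≠ 0) ∧
      ∃ d : ℝ × ℤ, |d.1| = 1 ∧ ∀ᶠ t in 𝓝[>] x, T α (B t) = branch d (B t) := by
  have hBx : ContinuousAt B x := (hB.self_of_nhdsWithin self_mem_Ici).1.continuousAt
  have hw0 := ne_zero_of_eventually_iterate_T_eq hα hd hjn hB hTj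
  have hIcc : ∀ᶠ t in 𝓝[>] x, B t ∈ Icc (α - 1) α := by
    filter_upwards [hTj, nhdsWithin_le_nhds hx] with t ht htI
    exact ht ▸ iterate_T_mem_Icc hα htI j
  have hwI : B x ∈ Icc (α - 1) α :=
    isClosed_Icc.mem_of_tendsto (hBx.tendsto.mono_left nhdsWithin_le_nhds) hIcc
  refine ⟨(eventually_nhdsGE_of_nhdsGT (p := fun t => B t ∈ Icc (α - 1) α) hwI hIcc).and
    (mem_nhdsWithin_of_mem_nhds (hBx.eventually_ne hw0)), ?_⟩
  obtain ⟨l, hl, hBl⟩ : ∃ l, (l = 𝓝[>] B x ∨ l = 𝓝[<] B x) ∧ Tendsto B (𝓝[>] x) l := by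
    have hlim := hBx.tendsto.mono_left (nhdsWithin_le_nhds (s := Ioi x))
    rcases eventually_lt_or_eventually_gt_of_hasDerivAt hB with h | h
    exacts [⟨_, Or.inl rfl, tendsto_nhdsWithin_iff.2 ⟨hlim, h⟩⟩,
      ⟨_, Or.inr rfl, tendsto_nhdsWithin_iff.2 ⟨hlim, h⟩⟩]
  obtain ⟨d, hd1, hTd⟩ := exists_eventually_T_eq_branch α hw0 hl
  exact ⟨d, hd1, hBl.eventually hTd⟩

theorem exists_digits_iterate_eq_branchComp (hx : Icc (α - 1) α ∈ 𝓝 x) :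
    ∀ j ≤ n, ∃ L : List (ℝ × ℤ), L.length = j ∧ (∀ᶠ t in 𝓝[≥] x, Admissible α L t) ∧
      ∀ᶠ t in 𝓝[>] x, ∀ k ≤ j, (T α)^[k] t = branchComp (L.take k) t
  | 0, _ => ⟨[], rfl, Eventually.of_forall fun _ => trivial,
      Eventually.of_forall fun t k hk => by simp [Nat.le_zero.1 hk, branchComp]⟩
  | j + 1, hj => by
    obtain ⟨L, hlen, hadm, horb⟩ := exists_digits_iterate_eq_branchComp hx j (by omega)
    have hTj : ∀ᶠ t in 𝓝[>] x, (T α)^[j] t = branchComp L t :=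
      horb.mono fun t ht => by simpa [← hlen] using ht j le_rfl
    obtain ⟨hval, d, hd1, hTd⟩ := exists_eventually_T_comp_eq_branch hα hd hx (by omega)
      (hadm.mono fun t ht => ⟨hasDerivAt_branchComp ht, branchDeriv_ne_zero ht⟩) hTj
    refine ⟨L ++ [d], by simp [hlen], ?_, ?_⟩
    · filter_upwards [hadm, hval] with t ht hv
      exact admissible_append_singleton ht hd1 hv.1 hv.2
    · filter_upwards [horb, hTj, hTd] with t ht htj htd k hk
      rcases Nat.le_succ_iff.1 hk with hk | rfl
      · rw [List.take_append_of_le_length (hlen ▸ hk)]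
        exact ht k hk
      · rw [List.take_of_length_le (by simp [hlen]), branchComp_append_singleton,
          Function.iterate_succ_apply', htj, htd]

end Cylinder

lemma eventuallyEq_weight {α x : ℝ} {F : ℝ → ℝ} (θ : ℂ) (f : ℝ → ℝ) {n : ℕ} {L : List (ℝ × ℤ)}
    (hlen : L.length = n) (hadm : ∀ᶠ t in 𝓝[≥] x, Admissible α L t)
    (horb : ∀ᶠ t in 𝓝[>] x, ∀ k ≤ n, F^[k] t = branchComp (L.take k) t) :
    (fun y => Complex.exp (θ * ((∑ k ∈ Finset.range n, f (F^[k] y) : ℝ) : ℂ))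
      / ((deriv F^[n] y : ℝ) : ℂ)) =ᶠ[𝓝[>] x] weight θ f L := by
  subst hlen
  filter_upwards [horb, eventually_eventually_nhds_of_nhdsGT horb,
    nhdsWithin_mono x Ioi_subset_Ici_self hadm] with t ht hnhds hadmt
  have hsum : ∑ k ∈ Finset.range L.length, f (F^[k] t) = birkhoffSum f L t := by
    rw [birkhoffSum_eq_sum]
    exact Finset.sum_congr rfl fun k hk => by rw [ht k (Finset.mem_range.1 hk).le]
  have hderiv : deriv F^[L.length] t = branchDeriv L t := by
    have hF : F^[L.length] =ᶠ[𝓝 t] branchComp L :=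
      hnhds.mono fun s hs => by simpa using hs L.length le_rfl
    rw [hF.deriv_eq, (hasDerivAt_branchComp hadmt).deriv]
  simp only [weight, hsum, hderiv]

end AlphaCF

open AlphaCF

theorem deriv_perturbed_weight_bound_general (α : ℝ) (hα : α ∈ Ioo (0:ℝ) 1) (n : ℕ)
    (f f' : ℝ → ℝ) (hf : ∀ x ∈ Icc (α - 1) α, HasDerivAt f (f' x) x)
    (Bf Bf' : ℝ) (hBf : ∀ x ∈ Icc (α - 1) α, |f x| ≤ Bf)
    (hBf' : ∀ x ∈ Icc (α - 1) α, |f' x| ≤ Bf')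
    (θ : ℂ)
    (U : Set ℝ) (hU : IsOpen U) (hUI : U ⊆ Icc (α - 1) α)
    (hd : ∀ x ∈ U, deriv ((T α)^[n]) x ≠ 0) :
    ∀ x ∈ U,
      ‖deriv (fun y => Complex.exp
          (θ * ((∑ k ∈ Finset.range n, f ((T α)^[k] y) : ℝ) : ℂ))
          / ((deriv ((T α)^[n]) y : ℝ) : ℂ)) x‖
        ≤ Real.exp (n * ‖θ‖ * Bf) * (‖θ‖ * Bf' + 2)
            / (1 - max (α ^ 2) ((α - 1) ^ 2)) := by
  intro x hx
  obtain ⟨L, hlen, hadm, horb⟩ := exists_digits_iterate_eq_branchComp hα (hd x hx)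
    (mem_of_superset (hU.mem_nhds hx) hUI) n le_rfl
  obtain ⟨v, hv, hvb⟩ :=
    exists_hasDerivAt_weight hα hf hBf hBf' θ (hadm.self_of_nhdsWithin self_mem_Ici)
  refine norm_deriv_le_of_eventuallyEq_nhdsGT hv (eventuallyEq_weight θ f hlen hadm horb)
    (hvb.trans ?_)
  have hBf'0 : 0 ≤ Bf' := (abs_nonneg _).trans (hBf' x (hUI hx))
  calc _ ≤ Real.exp (n * ‖θ‖ * Bf) * ((‖θ‖ * Bf' + 2) * (1 / (1 - γ α))) := by
        rw [hlen]
        gcongr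
        exact geom_sum_γ_le hα n
    _ = _ := by rw [γ]; ring

/-- for `α ∈ (0,1)`, `n ≥ 1`, `f` of class `C¹` with `‖f‖_{C¹} ≤ 1` and
`θ ∈ ℂ`, on the interior of each cylinder of `𝒫_n` (an open set where `T_α^n` is smooth
with nonvanishing derivative) we have
`|(e^{θ S_n f}/(T_α^n)')'| ≤ e^{n|θ|‖f‖_∞} (|θ|‖f'‖_∞ + 2)/(1-γ_α)`. -/
theorem deriv_perturbed_weight_bound (α : ℝ) (hα : α ∈ Ioo (0:ℝ) 1) (n : ℕ) (hn : 1 ≤ n)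
    (f f' : ℝ → ℝ) (hf : ∀ x ∈ Icc (α - 1) α, HasDerivAt f (f' x) x)
    (Bf Bf' : ℝ) (hBf : ∀ x ∈ Icc (α - 1) α, |f x| ≤ Bf)
    (hBf' : ∀ x ∈ Icc (α - 1) α, |f' x| ≤ Bf')
    (hC1 : Bf ≤ 1 ∧ Bf' ≤ 1) (θ : ℂ)
    (U : Set ℝ) (hU : IsOpen U) (hUI : U ⊆ Icc (α - 1) α)
    (hsm : ContDiffOn ℝ 2 ((T α)^[n]) U)
    (hd : ∀ x ∈ U, deriv ((T α)^[n]) x ≠ 0) :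
    ∀ x ∈ U,
      ‖deriv (fun y => Complex.exp
          (θ * ((∑ k ∈ Finset.range n, f ((T α)^[k] y) : ℝ) : ℂ))
          / ((deriv ((T α)^[n]) y : ℝ) : ℂ)) x‖
        ≤ Real.exp (n * ‖θ‖ * Bf) * (‖θ‖ * Bf' + 2)
            / (1 - max (α ^ 2) ((α - 1) ^ 2)) :=
  deriv_perturbed_weight_bound_general α hα n f f' hf Bf Bf' hBf hBf' θ U hU hUI hd
end

section
/- For α, β ∈ (0,1), the L¹([0,1]) distance between x ↦ log|x+α−1| and x ↦ log|x+β−1| is O(−|α−β|·log|α−β|) as |α−β| → 0; more precisely there is a constant C such that ∫_0^1 | log|x+α−1| − log|x+β−1| | dx ≤ C(|α−β| + |α−β|·|log|α−β||) for all α ≠ β in (0,1). -/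
/-!
Put `a = 1 - α`, `b = 1 - β` and `f x = log |x - a| - log |x - b|`. Since `G y = y log y - y`
(`logPrimitive`) is a primitive of `log |y|` on the whole line, `f` has the primitive
`D x = G (x - a) - G (x - b)`, and `f` changes sign exactly once, at the midpoint `m` of `a` and
`b`. Hence `∫₀¹ |f| = 2 D(m) - D(0) - D(1)`. `G` is odd and decreasing on `(0, 1]`, so `D(0)` and
`D(1)` are nonnegative and can be dropped, while `2 D(m) = -4 ((δ/2) log (δ/2) - δ/2)` with
`δ = |a - b|` is of size `δ |log δ|`.
-/

open Set MeasureTheory Real intervalIntegral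

noncomputable def logPrimitive (x : ℝ) : ℝ := x * log x - x

lemma logPrimitive_neg (x : ℝ) : logPrimitive (-x) = -logPrimitive x := by
  simp only [logPrimitive, log_neg_eq_log]; ring

lemma integral_log_eq_logPrimitive (u v : ℝ) :
    ∫ x in u..v, log x = logPrimitive v - logPrimitive u := by
  rw [integral_log, logPrimitive, logPrimitive]; ring

lemma logPrimitive_antitoneOn : AntitoneOn logPrimitive (Ioc 0 1) := by
  rintro t ⟨ht, -⟩ s ⟨hs, hs1⟩ hts
  have hlog_ratio : log s - log t ≤ s / t - 1 := by
    rw [← log_div hs.ne' ht.ne']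
    exact log_le_sub_one_of_pos (by positivity)
  have hlog_diff : t * (log s - log t) ≤ s - t :=
    calc t * (log s - log t) ≤ t * (s / t - 1) := mul_le_mul_of_nonneg_left hlog_ratio ht.le
      _ = s - t := by field_simp
  have hlog_s : (s - t) * log s ≤ 0 :=
    mul_nonpos_of_nonneg_of_nonpos (sub_nonneg.2 hts) (log_nonpos hs.le hs1)
  have hsplit : logPrimitive s - logPrimitive t
      = (s - t) * log s + t * (log s - log t) - (s - t) := by
    simp only [logPrimitive]; ring
  linarith

lemma log_le_log_of_abs_le {u v : ℝ} (hu : u ≠ 0) (h : |u| ≤ |v|) : log u ≤ log v := by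
  rw [← log_abs u, ← log_abs v]
  exact log_le_log (abs_pos.2 hu) h

lemma intervalIntegrable_log_sub (c u v : ℝ) :
    IntervalIntegrable (fun x => log (x - c)) volume u v := by
  simpa using intervalIntegral.intervalIntegrable_log'.comp_sub_right (a := u - c) (b := v - c) c

lemma integral_log_sub (c u v : ℝ) :
    ∫ x in u..v, log (x - c) = logPrimitive (v - c) - logPrimitive (u - c) := by
  rw [integral_comp_sub_right (fun x => log x), integral_log_eq_logPrimitive]

lemma integral_abs_log_sub_sub_log_sub {a b p q : ℝ} (hba : b < a)
    (hp : p ≤ (a + b) / 2) (hq : (a + b) / 2 ≤ q) :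
    ∫ x in p..q, |log (x - a) - log (x - b)|
      = -4 * logPrimitive ((a - b) / 2) - (logPrimitive (p - a) - logPrimitive (p - b))
        - (logPrimitive (q - a) - logPrimitive (q - b)) := by
  set m := (a + b) / 2 with hm
  have hint (u v : ℝ) : IntervalIntegrable (fun x => log (x - a) - log (x - b)) volume u v :=
    (intervalIntegrable_log_sub a u v).sub (intervalIntegrable_log_sub b u v)
  have hprim (u v : ℝ) : ∫ x in u..v, (log (x - a) - log (x - b))
      = (logPrimitive (v - a) - logPrimitive (v - b))
        - (logPrimitive (u - a) - logPrimitive (u - b)) := by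
    rw [integral_sub (intervalIntegrable_log_sub a u v) (intervalIntegrable_log_sub b u v),
      integral_log_sub, integral_log_sub]
    ring
  have hleft : ∫ x in p..m, |log (x - a) - log (x - b)|
      = ∫ x in p..m, (log (x - a) - log (x - b)) := by
    refine integral_congr_ae ?_
    filter_upwards [Measure.ae_ne volume b] with x hxb hx
    have hxm : x ≤ m := (uIoc_of_le hp ▸ hx).2
    refine abs_of_nonneg (sub_nonneg.2 (log_le_log_of_abs_le (sub_ne_zero.2 hxb) ?_))
    rw [abs_of_neg (by linarith : x - a < 0), abs_le]
    constructor <;> linarith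
  have hright : ∫ x in m..q, |log (x - a) - log (x - b)|
      = -∫ x in m..q, (log (x - a) - log (x - b)) := by
    rw [← intervalIntegral.integral_neg]
    refine integral_congr_ae ?_
    filter_upwards [Measure.ae_ne volume a] with x hxa hx
    have hmx : m < x := (uIoc_of_le hq ▸ hx).1
    refine abs_of_nonpos (sub_nonpos.2 (log_le_log_of_abs_le (sub_ne_zero.2 hxa) ?_))
    rw [abs_of_pos (by linarith : 0 < x - b), abs_le]
    constructor <;> linarith
  have hma : m - a = -((a - b) / 2) := by ring
  have hmb : m - b = (a - b) / 2 := by ring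
  rw [← integral_add_adjacent_intervals (hint p m).abs (hint m q).abs, hleft, hright, hprim,
    hprim, hma, hmb, logPrimitive_neg]
  ring

lemma integral_abs_log_sub_sub_log_sub_le_of_lt {a b : ℝ} (hb : 0 < b) (hba : b < a)
    (ha : a < 1) :
    ∫ x in (0:ℝ)..1, |log (x - a) - log (x - b)|
      ≤ 4 * ((a - b) + (a - b) * |log (a - b)|) := by
  rw [integral_abs_log_sub_sub_log_sub hba (by linarith) (by linarith)]
  have hzero : 0 ≤ logPrimitive (0 - a) - logPrimitive (0 - b) := by
    rw [zero_sub, zero_sub, logPrimitive_neg, logPrimitive_neg, neg_sub_neg, sub_nonneg]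
    exact logPrimitive_antitoneOn ⟨hb, by linarith⟩ ⟨by linarith, ha.le⟩ hba.le
  have hone : 0 ≤ logPrimitive (1 - a) - logPrimitive (1 - b) :=
    sub_nonneg.2 (logPrimitive_antitoneOn ⟨by linarith, by linarith⟩ ⟨by linarith, by linarith⟩
      (by linarith))
  have hmid : -4 * logPrimitive ((a - b) / 2) ≤ 4 * ((a - b) + (a - b) * |log (a - b)|) := by
    have hδ : 0 < a - b := sub_pos.2 hba
    have hlog_two : log 2 ≤ 1 := by linarith [log_le_sub_one_of_pos (by norm_num : (0:ℝ) < 2)]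
    rw [logPrimitive, log_div hδ.ne' two_ne_zero]
    nlinarith [mul_le_mul_of_nonneg_left (neg_le_abs (log (a - b))) hδ.le,
      mul_le_mul_of_nonneg_left hlog_two hδ.le, mul_nonneg hδ.le (abs_nonneg (log (a - b)))]
  linarith

lemma integral_abs_log_sub_sub_log_sub_le {a b : ℝ} (ha : a ∈ Ioo 0 1) (hb : b ∈ Ioo 0 1) :
    ∫ x in (0:ℝ)..1, |log (x - a) - log (x - b)|
      ≤ 4 * (|a - b| + |a - b| * |log (|a - b|)|) := by
  wlog hba : b ≤ a generalizing a b
  · have := this hb ha (le_of_not_ge hba)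
    simp_rw [abs_sub_comm] at this ⊢
    exact this
  rcases hba.eq_or_lt with rfl | hba
  · simp
  rw [abs_of_pos (sub_pos.2 hba)]
  exact integral_abs_log_sub_sub_log_sub_le_of_lt hb.1 hba ha.2

/-- there is a constant `C` such that for all `α ≠ β` in `(0,1)`,
`∫_0^1 | log|x+α-1| - log|x+β-1| | dx ≤ C (|α-β| + |α-β|·|log|α-β||)`. -/
theorem log_translates_L1_close :
    ∃ C : ℝ, ∀ α ∈ Ioo (0:ℝ) 1, ∀ β ∈ Ioo (0:ℝ) 1, α ≠ β →
      ∫ x in Icc (0:ℝ) 1, |Real.log (|x + α - 1|) - Real.log (|x + β - 1|)|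
        ≤ C * (|α - β| + |α - β| * |Real.log (|α - β|)|) := by
  refine ⟨4, fun α ⟨hα0, hα1⟩ β ⟨hβ0, hβ1⟩ _ => ?_⟩
  have key := integral_abs_log_sub_sub_log_sub_le (a := 1 - α) (b := 1 - β)
    ⟨by linarith, by linarith⟩ ⟨by linarith, by linarith⟩
  have hshift (x γ : ℝ) : log |x + γ - 1| = log (x - (1 - γ)) := by
    rw [log_abs]; ring_nf
  rw [show 1 - α - (1 - β) = β - α by ring, abs_sub_comm β α] at key
  rw [integral_Icc_eq_integral_Ioc, ← integral_of_le zero_le_one]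
  simp_rw [hshift]
  exact key
end
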